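/- arXiv:1509.08988 — 6 statements merged into one kernel-verified Lean document; each statement's English description precedes it below -/
import Mathlib

section
/- Under the hypotheses of the main representation theorem (φ : B_b → ℝ increasing, convex, dominated by Σ_n φ_n(g_n) whenever f ≤ ⊕g, with each φ_n satisfying the tightness condition), for every f ∈ C_b and every sequence (f_j) in C_b with f_j ↓ 0 pointwise, one has φ(f + f_j) ↓ φ(f), i.e. φ is continuous from above at every bounded continuous function along decreasing continuous perturbations. -/
/-!
Since `φ(f + f_j)` decreases and stays above `φ(f)`, only the upper bound needs proof. Given
`t ∈ (0, 1]`, tightness yields a compact `K = ∏ K_n` with `φ(2(m/t)·1_{Kᶜ}) ≤ 1`, where `m` bounds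
the `f_j`, and Dini's theorem makes `f_j ≤ t` on `K` for large `j`. Then
`f + f_j ≤ (1 - t) f + t (f + 1 + (m/t)·1_{Kᶜ})`, and convexity (once with weight `t`, once at the
midpoint) gives `φ(f + f_j) ≤ φ(f) + t D` with `D` independent of `t`.
-/

set_option autoImplicit false

open MeasureTheory Filter Topology

variable {X : ℕ → Type*} [∀ n, MetricSpace (X n)]
  [∀ n, MeasurableSpace (X n)] [∀ n, BorelSpace (X n)]
  [MeasurableSpace (∀ n, X n)] [BorelSpace (∀ n, X n)]

/-- Bounded continuous real functions on the product. -/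
def Cb (f : (∀ n, X n) → ℝ) : Prop := Continuous f ∧ ∃ c, ∀ x, |f x| ≤ c

/-- Bounded upper semicontinuous real functions on the product. -/
def Ub (f : (∀ n, X n) → ℝ) : Prop := UpperSemicontinuous f ∧ ∃ c, ∀ x, |f x| ≤ c

/-- Bounded Borel measurable real functions on the product. -/
def Bb (f : (∀ n, X n) → ℝ) : Prop := Measurable f ∧ ∃ c, ∀ x, |f x| ≤ c

/-- Bounded nonnegative Borel measurable functions on the `n`-th factor. -/
def Bbn {n : ℕ} (g : X n → ℝ) : Prop :=
  Measurable g ∧ (∀ x, 0 ≤ g x) ∧ ∃ c, ∀ x, g x ≤ c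

/-- The convex conjugate `φ*_{C_b}(μ) = sup_{g ∈ C_b} (∫ g dμ - φ(g))`, valued in `EReal`. -/
noncomputable def conjCb (φ : ((∀ n, X n) → ℝ) → ℝ) (μ : Measure (∀ n, X n)) : EReal :=
  ⨆ g : {g : (∀ n, X n) → ℝ // Cb g}, (((∫ x, g.1 x ∂μ) - φ g.1 : ℝ) : EReal)

/-- The convex conjugate over bounded upper semicontinuous functions. -/
noncomputable def conjUb (φ : ((∀ n, X n) → ℝ) → ℝ) (μ : Measure (∀ n, X n)) : EReal :=
  ⨆ g : {g : (∀ n, X n) → ℝ // Ub g}, (((∫ x, g.1 x ∂μ) - φ g.1 : ℝ) : EReal)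

open Set

section ConvexMonotone

variable {E : Type*} [AddCommGroup E] [Module ℝ E] {s : Set E} {φ : E → ℝ}

lemma MonotoneOn.map_add_le_of_le_smul [PartialOrder E] [IsOrderedAddMonoid E]
    (hmono : MonotoneOn φ s) (hconv : ConvexOn ℝ s φ) {f g h : E} {t : ℝ} (hf : f ∈ s)
    (hfg : f + g ∈ s) (hfh : f + h ∈ s) (ht0 : 0 ≤ t) (ht1 : t ≤ 1) (hg : g ≤ t • h) :
    φ (f + g) ≤ φ f + t * (φ (f + h) - φ f) := by
  have hcomb : (1 - t) • f + t • (f + h) = f + t • h := by module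
  have hmem : (1 - t) • f + t • (f + h) ∈ s := hconv.1 hf hfh (by linarith) ht0 (by ring)
  calc φ (f + g) ≤ φ ((1 - t) • f + t • (f + h)) :=
        hmono hfg hmem (by rw [hcomb]; exact (add_le_add_iff_left f).2 hg)
    _ ≤ (1 - t) • φ f + t • φ (f + h) := hconv.2 hf hfh (by linarith) ht0 (by ring)
    _ = φ f + t * (φ (f + h) - φ f) := by simp only [smul_eq_mul]; ring

lemma ConvexOn.map_add_le_midpoint (hconv : ConvexOn ℝ s φ) {a b : E} (ha : (2 : ℝ) • a ∈ s)
    (hb : (2 : ℝ) • b ∈ s) : φ (a + b) ≤ (φ ((2 : ℝ) • a) + φ ((2 : ℝ) • b)) / 2 := by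
  have hmid : (1 / 2 : ℝ) • (2 : ℝ) • a + (1 / 2 : ℝ) • (2 : ℝ) • b = a + b := by module
  have := hconv.2 ha hb (by norm_num : (0 : ℝ) ≤ 1 / 2) (by norm_num : (0 : ℝ) ≤ 1 / 2)
    (by norm_num)
  rw [hmid, smul_eq_mul, smul_eq_mul] at this
  linarith

end ConvexMonotone

lemma indicator_compl_pi_le_tsum {ι : Type*} {Y : ι → Type*} (K : ∀ i, Set (Y i)) (M : ℝ)
    (x : ∀ i, Y i) :
    (∑' i, ENNReal.ofReal ((K i)ᶜ.indicator (fun _ => M) (x i))) = ⊤ ∨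
      (univ.pi K)ᶜ.indicator (fun _ => M) x ≤
        (∑' i, ENNReal.ofReal ((K i)ᶜ.indicator (fun _ => M) (x i))).toReal := by
  rw [or_iff_not_imp_left]
  intro htop
  by_cases hx : x ∈ univ.pi K
  · simp [hx]
  obtain ⟨i, hi⟩ : ∃ i, x i ∉ K i := by simpa using hx
  rw [indicator_of_mem (mem_compl hx), ← ENNReal.ofReal_le_iff_le_toReal htop]
  have := ENNReal.le_tsum (f := fun i => ENNReal.ofReal ((K i)ᶜ.indicator (fun _ => M) (x i))) i
  simpa [hi] using this

lemma Bbn.indicator_const {X : ℕ → Type*} [∀ n, MeasurableSpace (X n)] {n : ℕ} {K : Set (X n)}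
    (hK : MeasurableSet K) {c : ℝ} (hc : 0 ≤ c) :
    Bbn (K.indicator fun _ => c) :=
  ⟨measurable_const.indicator hK, fun _ => indicator_nonneg (fun _ _ => hc) _,
    c, fun _ => indicator_le_self' (fun _ _ => hc) _⟩

lemma IsCompact.eventually_forall_lt_of_antitone {α ι : Type*} [TopologicalSpace α] [Preorder ι]
    {K : Set α} (hK : IsCompact K) {F : ι → α → ℝ} (hF : ∀ i, Continuous (F i))
    (hanti : ∀ x, Antitone fun i => F i x) (hlim : ∀ x, Tendsto (fun i => F i x) atTop (𝓝 0))
    {δ : ℝ} (hδ : 0 < δ) : ∀ᶠ i in atTop, ∀ x ∈ K, F i x < δ := by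
  have hunif := Antitone.tendstoUniformlyOn_of_forall_tendsto hK (fun i => (hF i).continuousOn)
    (fun x _ => hanti x) continuousOn_const (fun x _ => hlim x)
  filter_upwards [Metric.tendstoUniformlyOn_iff.1 hunif δ hδ] with i hi x hx
  have := hi x hx
  rw [Real.dist_eq, zero_sub, abs_neg] at this
  exact (le_abs_self _).trans_lt this

section

variable {X : ℕ → Type*} [MeasurableSpace (∀ n, X n)]

lemma Bb.add {f g : (∀ n, X n) → ℝ} (hf : Bb f) (hg : Bb g) : Bb (f + g) := by
  obtain ⟨hfm, cf, hcf⟩ := hf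
  obtain ⟨hgm, cg, hcg⟩ := hg
  exact ⟨hfm.add hgm, cf + cg, fun x => (abs_add_le _ _).trans (add_le_add (hcf x) (hcg x))⟩

lemma Bb.const_smul {f : (∀ n, X n) → ℝ} (hf : Bb f) (c : ℝ) : Bb (c • f) := by
  obtain ⟨hfm, cf, hcf⟩ := hf
  refine ⟨hfm.const_smul c, |c| * cf, fun x => ?_⟩
  rw [Pi.smul_apply, smul_eq_mul, abs_mul]
  exact mul_le_mul_of_nonneg_left (hcf x) (abs_nonneg c)

lemma Bb.const (c : ℝ) : Bb (X := X) fun _ => c :=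
  ⟨measurable_const, |c|, fun _ => le_rfl⟩

lemma Bb.indicator_const {K : Set (∀ n, X n)} (hK : MeasurableSet K) (c : ℝ) :
    Bb (K.indicator fun _ => c) :=
  ⟨measurable_const.indicator hK, |c|, fun x => by
    by_cases hx : x ∈ K <;> simp [hx]⟩

lemma Cb.bb [∀ n, MetricSpace (X n)] [OpensMeasurableSpace (∀ n, X n)] {f : (∀ n, X n) → ℝ}
    (hf : Cb f) : Bb f :=
  ⟨hf.1.measurable, hf.2⟩

lemma convex_setOf_bb : Convex ℝ {f : (∀ n, X n) → ℝ | Bb f} :=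
  fun _ hf _ hg a b _ _ _ => (hf.const_smul a).add (hg.const_smul b)

/-- Take `K = ∏ K_n` with `φ_n(M·1_{K_nᶜ}) ≤ ε / 2^(n+1)`; off `K` some coordinate leaves its
`K_n`, so `M·1_{Kᶜ} ≤ Σ_n M·1_{K_nᶜ}`. -/
lemma exists_isCompact_map_indicator_compl_le [∀ n, MetricSpace (X n)]
    [∀ n, MeasurableSpace (X n)] [∀ n, OpensMeasurableSpace (X n)]
    [OpensMeasurableSpace (∀ n, X n)] (φ : ((∀ n, X n) → ℝ) → ℝ)
    (φn : ∀ n, (X n → ℝ) → ℝ) (hφn_nonneg : ∀ (n : ℕ) (g : X n → ℝ), Bbn g → 0 ≤ φn n g)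
    (htight : ∀ (n : ℕ) (m ε : ℝ), 0 < m → 0 < ε →
      ∃ K : Set (X n), IsCompact K ∧ φn n (Set.indicator Kᶜ fun _ => m) ≤ ε)
    (hdom : ∀ (f : (∀ n, X n) → ℝ) (g : ∀ n, X n → ℝ), Bb f → (∀ n, Bbn (g n)) →
      (∀ x, (∑' n, ENNReal.ofReal (g n (x n))) = ⊤ ∨
        f x ≤ (∑' n, ENNReal.ofReal (g n (x n))).toReal) →
      Summable (fun n => φn n (g n)) → φ f ≤ ∑' n, φn n (g n))
    {M ε : ℝ} (hM : 0 < M) (hε : 0 < ε) :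
    ∃ K : Set (∀ n, X n), IsCompact K ∧ φ (Kᶜ.indicator fun _ => M) ≤ ε := by
  choose Kn hKc hKφ using fun n => htight n M (ε / 2 / 2 ^ n) hM (by positivity)
  have hBbn : ∀ n, Bbn ((Kn n)ᶜ.indicator fun _ => M) := fun n =>
    Bbn.indicator_const (hKc n).isClosed.measurableSet.compl hM.le
  have hsum : Summable fun n => φn n ((Kn n)ᶜ.indicator fun _ => M) :=
    (summable_geometric_two' ε).of_nonneg_of_le (fun n => hφn_nonneg n _ (hBbn n)) hKφ
  have hK : IsCompact (univ.pi Kn) := isCompact_univ_pi hKc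
  refine ⟨univ.pi Kn, hK, ?_⟩
  calc φ _ ≤ ∑' n, φn n ((Kn n)ᶜ.indicator fun _ => M) :=
        hdom _ _ (Bb.indicator_const hK.isClosed.measurableSet.compl M) hBbn
          (indicator_compl_pi_le_tsum Kn M) hsum
    _ ≤ ∑' n, ε / 2 / 2 ^ n := hsum.tsum_le_tsum hKφ (summable_geometric_two' ε)
    _ = ε := tsum_geometric_two' ε

lemma eventually_map_add_lt [∀ n, MetricSpace (X n)] [OpensMeasurableSpace (∀ n, X n)]
    {φ : ((∀ n, X n) → ℝ) → ℝ} (hmono : MonotoneOn φ {f | Bb f})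
    (hconv : ConvexOn ℝ {f | Bb f} φ)
    (htight : ∀ M : ℝ, 0 < M → ∃ K, IsCompact K ∧ φ (Kᶜ.indicator fun _ => M) ≤ 1)
    {f : (∀ n, X n) → ℝ} (hf : Bb f) {fj : ℕ → (∀ n, X n) → ℝ} (hfj : ∀ j, Cb (fj j))
    (hanti : ∀ x, Antitone fun j => fj j x) (hlim : ∀ x, Tendsto (fun j => fj j x) atTop (𝓝 0))
    {ε : ℝ} (hε : 0 < ε) : ∀ᶠ j in atTop, φ (f + fj j) < φ f + ε := by
  obtain ⟨m, hm, hfjm⟩ : ∃ m : ℝ, 0 < m ∧ ∀ j x, fj j x ≤ m := by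
    obtain ⟨-, c, hc⟩ := hfj 0
    exact ⟨max c 1, by positivity, fun j x => (hanti x (Nat.zero_le j)).trans
      ((le_abs_self _).trans ((hc x).trans (le_max_left _ _)))⟩
  set D := (φ ((2 : ℝ) • (f + 1)) + 1) / 2 - φ f with hD
  obtain ⟨t, htD, ht0, ht1⟩ : ∃ t, t * D < ε ∧ t ∈ Ioc (0 : ℝ) 1 := by
    have hsmall : ∀ᶠ t in 𝓝[>] (0 : ℝ), t * D < ε :=
      nhdsWithin_le_nhds <| (continuous_mul_const D).tendsto' 0 0 (zero_mul D) |>.eventually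
        (gt_mem_nhds hε)
    exact (hsmall.and (Ioc_mem_nhdsGT one_pos)).exists
  obtain ⟨K, hK, hφK⟩ := htight (2 * (m / t)) (by positivity)
  set u := Kᶜ.indicator fun _ => m / t
  have hBu : Bb u := Bb.indicator_const hK.isClosed.measurableSet.compl _
  have hBf1 : Bb (f + 1) := hf.add (Bb.const 1)
  have h2u : (2 : ℝ) • u = Kᶜ.indicator fun _ => 2 * (m / t) := by
    ext x
    by_cases hx : x ∈ K <;> simp [u, hx]
  have hφfu : φ (f + (1 + u)) ≤ D + φ f := by
    have := hconv.map_add_le_midpoint (hBf1.const_smul 2) (hBu.const_smul 2)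
    rw [h2u] at this
    rw [← add_assoc, hD]
    linarith
  filter_upwards [hK.eventually_forall_lt_of_antitone (fun j => (hfj j).1) hanti hlim ht0]
    with j hj
  have hle : fj j ≤ t • (1 + u) := fun x => by
    by_cases hx : x ∈ K
    · simpa [u, hx] using (hj x hx).le
    · have : t * (1 + m / t) = t + m := by field_simp
      simp only [u, Pi.smul_apply, Pi.add_apply, Pi.one_apply, indicator_of_mem (mem_compl hx),
        smul_eq_mul, this]
      linarith [hfjm j x]
  calc φ (f + fj j) ≤ φ f + t * (φ (f + (1 + u)) - φ f) :=
        hmono.map_add_le_of_le_smul hconv hf (hf.add (hfj j).bb) (hf.add ((Bb.const 1).add hBu))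
          ht0.le ht1 hle
    _ ≤ φ f + t * D := by gcongr; linarith
    _ < φ f + ε := by linarith

end

/-- Continuity from above of `φ` at bounded continuous `f` along decreasing continuous
perturbations `f_j ↓ 0`: one has `φ(f + f_j) ↓ φ(f)`. -/
theorem stmt1
    (φ : ((∀ n, X n) → ℝ) → ℝ) (φn : ∀ n, (X n → ℝ) → ℝ)
    (hφn_nonneg : ∀ (n : ℕ) (g : X n → ℝ), Bbn g → 0 ≤ φn n g)
    (hmono : ∀ f g, Bb f → Bb g → (∀ x, f x ≤ g x) → φ f ≤ φ g)
    (hconv : ∀ f g, Bb f → Bb g → ∀ t : ℝ, 0 ≤ t → t ≤ 1 →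
      φ (fun x => t * f x + (1 - t) * g x) ≤ t * φ f + (1 - t) * φ g)
    (htight : ∀ (n : ℕ) (m ε : ℝ), 0 < m → 0 < ε →
      ∃ K : Set (X n), IsCompact K ∧ φn n (Set.indicator Kᶜ fun _ => m) ≤ ε)
    (hdom : ∀ (f : (∀ n, X n) → ℝ) (g : ∀ n, X n → ℝ), Bb f → (∀ n, Bbn (g n)) →
      (∀ x, (∑' n, ENNReal.ofReal (g n (x n))) = ⊤ ∨
        f x ≤ (∑' n, ENNReal.ofReal (g n (x n))).toReal) →
      Summable (fun n => φn n (g n)) → φ f ≤ ∑' n, φn n (g n))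
    (f : (∀ n, X n) → ℝ) (hf : Cb f)
    (fj : ℕ → (∀ n, X n) → ℝ) (hfj : ∀ j, Cb (fj j))
    (hanti : ∀ x, Antitone fun j => fj j x)
    (hlim : ∀ x, Tendsto (fun j => fj j x) atTop (𝓝 0)) :
    Antitone (fun j => φ fun x => f x + fj j x) ∧
    Tendsto (fun j => φ fun x => f x + fj j x) atTop (𝓝 (φ f)) := by
  have hmonoOn : MonotoneOn φ {g | Bb g} := fun g hg g' hg' hle => hmono g g' hg hg' hle
  have hconvOn : ConvexOn ℝ {g | Bb g} φ := ⟨convex_setOf_bb, fun g hg g' hg' a b ha _ hab => by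
    obtain rfl : b = 1 - a := by linarith
    exact hconv g g' hg hg' a ha (by linarith)⟩
  have hBsum : ∀ j, Bb (f + fj j) := fun j => hf.bb.add (hfj j).bb
  have hlower : ∀ j, φ f ≤ φ (f + fj j) := fun j =>
    hmonoOn hf.bb (hBsum j) fun x => le_add_of_nonneg_right ((hanti x).le_of_tendsto (hlim x) j)
  refine ⟨fun i j hij => hmonoOn (hBsum j) (hBsum i) fun x =>
    (add_le_add_iff_left (f x)).2 (hanti x hij), ?_⟩
  refine tendsto_order.2 ⟨fun a ha => Eventually.of_forall fun j => ha.trans_le (hlower j),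
    fun a ha => ?_⟩
  have htightφ : ∀ M : ℝ, 0 < M → ∃ K, IsCompact K ∧ φ (Kᶜ.indicator fun _ => M) ≤ 1 :=
    fun M hM => exists_isCompact_map_indicator_compl_le φ φn hφn_nonneg htight hdom hM one_pos
  filter_upwards [eventually_map_add_lt hmonoOn hconvOn htightφ hf.bb hfj hanti hlim
    (sub_pos.2 ha)] with j hj
  exact hj.trans_eq (add_sub_cancel _ _)
end

section
/- Let X be a metric space, (μ_j) a sequence of finite Borel measures converging to μ in the topology σ(ca⁺, C_b) (i.e., ∫ g dμ_j → ∫ g dμ for all bounded continuous g), and let (f_j) be a decreasing sequence of bounded continuous functions with f_j ↓ f pointwise. Then limsup_j ∫ f_j dμ_j ≤ ∫ f dμ. -/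
set_option autoImplicit false

open MeasureTheory Filter Topology

/-- If finite Borel measures `μ_j → μ` in `σ(ca⁺, C_b)` and bounded continuous `f_j ↓ f`
pointwise (with `f` bounded), then `limsup_j ∫ f_j dμ_j ≤ ∫ f dμ`. -/
theorem stmt7 {X : Type*} [MetricSpace X] [MeasurableSpace X] [BorelSpace X]
    (μ : Measure X) [IsFiniteMeasure μ]
    (μs : ℕ → Measure X) (hμs : ∀ j, IsFiniteMeasure (μs j))
    (hconv : ∀ g : X → ℝ, Continuous g → (∃ c, ∀ x, |g x| ≤ c) →
      Tendsto (fun j => ∫ x, g x ∂(μs j)) atTop (𝓝 (∫ x, g x ∂μ)))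
    (f : X → ℝ) (fs : ℕ → X → ℝ)
    (hfs : ∀ j, Continuous (fs j)) (hfsb : ∀ j, ∃ c, ∀ x, |fs j x| ≤ c)
    (hanti : ∀ x, Antitone fun j => fs j x)
    (hlim : ∀ x, Tendsto (fun j => fs j x) atTop (𝓝 (f x)))
    (hfb : ∃ c, ∀ x, |f x| ≤ c) :
    Filter.limsup (fun j => ∫ x, fs j x ∂(μs j)) atTop ≤ ∫ x, f x ∂μ := by
  obtain ⟨c, hc⟩ := hfb
  have hf_le : ∀ j x, f x ≤ fs j x := fun j x =>
    le_of_tendsto (hlim x) (eventually_atTop.2 ⟨j, fun n hn => hanti x hn⟩)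
  have hint : ∀ k j, Integrable (fs k) (μs j) := by
    intro k j
    obtain ⟨ck, hck⟩ := hfsb k
    haveI := hμs j
    exact (integrable_const ck).mono' (hfs k).aestronglyMeasurable
      (ae_of_all _ fun x => by simpa [Real.norm_eq_abs] using hck x)
  have hintμ : ∀ k, Integrable (fs k) μ := by
    intro k
    obtain ⟨ck, hck⟩ := hfsb k
    exact (integrable_const ck).mono' (hfs k).aestronglyMeasurable
      (ae_of_all _ fun x => by simpa [Real.norm_eq_abs] using hck x)
  -- lower bound sequence
  have hlo : Tendsto (fun j => ∫ _x, (-c : ℝ) ∂(μs j)) atTop (𝓝 (∫ _x, (-c : ℝ) ∂μ)) :=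
    hconv (fun _ => -c) continuous_const ⟨|c|, fun _ => by simp⟩
  have hlo_le : ∀ j, (∫ _x, (-c : ℝ) ∂(μs j)) ≤ ∫ x, fs j x ∂(μs j) := by
    intro j
    haveI := hμs j
    refine integral_mono (integrable_const _) (hint j j) (fun x => ?_)
    exact (neg_le_of_abs_le (hc x)).trans (hf_le j x)
  have hcob : IsCoboundedUnder (· ≤ ·) atTop (fun j => ∫ x, fs j x ∂(μs j)) := by
    refine isCoboundedUnder_le_of_eventually_le atTop (x := (∫ _x, (-c : ℝ) ∂μ) - 1) ?_
    filter_upwards [hlo.eventually (eventually_gt_nhds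
      (show (∫ _x, (-c : ℝ) ∂μ) - 1 < ∫ _x, (-c : ℝ) ∂μ by linarith))] with j hj
    exact le_trans hj.le (hlo_le j)
  have key : ∀ k, limsup (fun j => ∫ x, fs j x ∂(μs j)) atTop ≤ ∫ x, fs k x ∂μ := by
    intro k
    have hb : Tendsto (fun j => ∫ x, fs k x ∂(μs j)) atTop (𝓝 (∫ x, fs k x ∂μ)) :=
      hconv (fs k) (hfs k) (hfsb k)
    have hle : (fun j => ∫ x, fs j x ∂(μs j)) ≤ᶠ[atTop] fun j => ∫ x, fs k x ∂(μs j) := by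
      filter_upwards [eventually_ge_atTop k] with j hj
      haveI := hμs j
      exact integral_mono (hint j j) (hint k j) (fun x => hanti x hj)
    calc limsup (fun j => ∫ x, fs j x ∂(μs j)) atTop
        ≤ limsup (fun j => ∫ x, fs k x ∂(μs j)) atTop :=
          limsup_le_limsup hle hcob hb.isBoundedUnder_le
      _ = ∫ x, fs k x ∂μ := hb.limsup_eq
  have hdom : Tendsto (fun k => ∫ x, fs k x ∂μ) atTop (𝓝 (∫ x, f x ∂μ)) := by
    obtain ⟨c0, hc0⟩ := hfsb 0
    refine tendsto_integral_of_dominated_convergence (fun _ => max c0 c)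
      (fun k => (hfs k).aestronglyMeasurable) (integrable_const _)
      (fun k => ae_of_all _ fun x => ?_) (ae_of_all _ fun x => hlim x)
    rw [Real.norm_eq_abs, abs_le]
    constructor
    · exact le_trans (neg_le_neg (le_max_right c0 c))
        ((neg_le_of_abs_le (hc x)).trans (hf_le k x))
    · exact le_trans ((hanti x (Nat.zero_le k)).trans (le_of_abs_le (hc0 x)))
        (le_max_left c0 c)
  exact ge_of_tendsto hdom (Eventually.of_forall key)
end

section
/- Let ψ be a positive linear functional on the space B(ν) of Borel functions dominated in absolute value by some ⊕g ∈ G(ν), and suppose ψ(f) − φ(f) ≤ C < ∞ for all f ∈ B(ν), where φ is increasing convex with φ(f) ≤ m + Σ_n ∫ g_n dν_n whenever f ≤ m + ⊕g. Then ψ(⊕g) = Σ_n ∫ g_n dν_n for every ⊕g ∈ G(ν) ∩ B(ν). -/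
set_option autoImplicit false

open MeasureTheory Filter Topology ENNReal

variable {X : ℕ → Type*} [∀ n, TopologicalSpace (X n)] [∀ n, PolishSpace (X n)]
  [∀ n, MeasurableSpace (X n)] [∀ n, BorelSpace (X n)]

/-- `⊕g(x) = Σ_n g_n(x_n)`, computed in `ℝ≥0∞` (the `g_n` are nonnegative). -/
noncomputable def oplus (g : ∀ n, X n → ℝ) (x : ∀ n, X n) : ℝ≥0∞ :=
  ∑' n, ENNReal.ofReal (g n (x n))

/-- `⊕g ∈ G(ν)`: the `g_n` are nonnegative Borel with `Σ_n ∫ g_n dν_n < ∞`. -/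
def Gadm (ν : ∀ n, Measure (X n)) (g : ∀ n, X n → ℝ) : Prop :=
  (∀ n, Measurable (g n)) ∧ (∀ n x, 0 ≤ g n x) ∧ (∀ n, Integrable (g n) (ν n)) ∧
    Summable fun n => ∫ x, g n x ∂ν n

/-- `f ∈ B(ν)`: Borel measurable and `|f| ≤ ⊕g` for some `⊕g ∈ G(ν)`. -/
def BigB (ν : ∀ n, Measure (X n)) (f : (∀ n, X n) → ℝ) : Prop :=
  Measurable f ∧ ∃ g, Gadm ν g ∧
    ∀ x, oplus g x = ⊤ ∨ |f x| ≤ (oplus g x).toReal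

/-- `f ∈ U(ν)`: upper semicontinuous, `f⁺` bounded and `f⁻ ∈ B(ν)`. -/
def BigU (ν : ∀ n, Measure (X n)) (f : (∀ n, X n) → ℝ) : Prop :=
  UpperSemicontinuous f ∧ (∃ c, ∀ x, f x ≤ c) ∧ BigB ν fun x => max (-f x) 0

/-- `𝒫(ν)`: Borel probability measures on the product with `n`-th marginal `ν n`. -/
def coupling (ν : ∀ n, Measure (X n)) : Set (Measure (∀ n, X n)) :=
  {μ | IsProbabilityMeasure μ ∧ ∀ n, μ.map (fun x => x n) = ν n}

/-!
Scaling is the whole argument. Applying `ψ - φ ≤ C` to `c • f` and letting `c → ∞` shows that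
`ψ f ≤ m + Σ_n ∫ h_n dν_n` whenever `f ≤ m + ⊕h`: the constant `C` disappears. With `f = ⊕g`,
`m = 0`, `h = g` this gives `ψ(⊕g) ≤ Σ_n ∫ g_n dν_n`; with `f = ±a` constant it gives
`ψ(a) = a`, so `ψ(S - ⊕g) = S - ψ(⊕g)` for `S = Σ_n ∫ g_n dν_n`. For the reverse inequality write
`Σ_n ∫ g_n - ⊕g ≤ Σ_n (∫ g_n - L_n) + ⊕(L - g)⁺` for summable levels `L_n ≥ 0`; the right-hand
side integrates to `Σ_n ∫ (g_n - L_n)⁺`, which tends to `0` as `L_n = t 2⁻ⁿ` with `t → ∞`.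
-/

set_option linter.unusedSectionVars false

theorem le_of_forall_pos_mul_le_add {a b C : ℝ} (h : ∀ c : ℝ, 0 < c → c * a ≤ C + c * b) :
    a ≤ b := by
  by_contra! hba
  have hc : 0 < (|C| + 1) / (a - b) := by have := sub_pos.2 hba; positivity
  have key : (|C| + 1) / (a - b) * (a - b) ≤ C := by linarith [h _ hc]
  rw [div_mul_cancel₀ _ (sub_pos.2 hba).ne'] at key
  linarith [le_abs_self C]

theorem tendsto_integral_max_sub_atTop {α : Type*} [MeasurableSpace α] {μ : Measure α}
    {f : α → ℝ} (hf : Integrable f μ) :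
    Tendsto (fun t : ℝ => ∫ x, max (f x - t) 0 ∂μ) atTop (𝓝 0) := by
  have h := tendsto_integral_filter_of_dominated_convergence (μ := μ) (l := atTop)
    (F := fun (t : ℝ) x => max (f x - t) 0) (f := fun _ => 0) (fun x => |f x|)
    (Eventually.of_forall fun t =>
      ((hf.aemeasurable.sub_const t).max aemeasurable_const).aestronglyMeasurable)
    ?_ hf.abs (Eventually.of_forall fun x => ?_)
  · simpa using h
  · filter_upwards [eventually_ge_atTop 0] with t ht
    refine Eventually.of_forall fun x => ?_
    rw [Real.norm_of_nonneg (le_max_right _ _)]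
    exact max_le (by linarith [le_abs_self (f x)]) (abs_nonneg _)
  · refine tendsto_const_nhds.congr' ?_
    filter_upwards [eventually_ge_atTop (f x)] with t ht
    rw [max_eq_right (by linarith)]

section Oplus

variable {ν : ∀ n, Measure (X n)} {g h : ∀ n, X n → ℝ} {x : ∀ n, X n}

theorem toReal_oplus (hg : ∀ n y, 0 ≤ g n y) : (oplus g x).toReal = ∑' n, g n (x n) := by
  rw [oplus, ENNReal.tsum_toReal_eq fun n => ENNReal.ofReal_ne_top]
  exact tsum_congr fun n => ENNReal.toReal_ofReal (hg n (x n))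

theorem summable_of_oplus_ne_top (hg : ∀ n y, 0 ≤ g n y) (hx : oplus g x ≠ ⊤) :
    Summable fun n => g n (x n) :=
  (ENNReal.summable_toReal hx).congr fun n => ENNReal.toReal_ofReal (hg n (x n))

theorem oplus_const_mul {c : ℝ} (hc : 0 ≤ c) :
    oplus (fun n y => c * g n y) x = ENNReal.ofReal c * oplus g x := by
  simp_rw [oplus, ENNReal.ofReal_mul hc, ENNReal.tsum_mul_left]

theorem toReal_oplus_const_mul {c : ℝ} (hc : 0 ≤ c) :
    (oplus (fun n y => c * g n y) x).toReal = c * (oplus g x).toReal := by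
  rw [oplus_const_mul hc, ENNReal.toReal_mul, ENNReal.toReal_ofReal hc]

theorem oplus_const_mul_eq_top {c : ℝ} (hc : 0 < c) (hx : oplus g x = ⊤) :
    oplus (fun n y => c * g n y) x = ⊤ := by
  rw [oplus_const_mul hc.le, hx]
  exact ENNReal.mul_top (ENNReal.ofReal_pos.2 hc).ne'

theorem oplus_add (hg : ∀ n y, 0 ≤ g n y) (hh : ∀ n y, 0 ≤ h n y) :
    oplus (fun n y => g n y + h n y) x = oplus g x + oplus h x := by
  simp_rw [oplus, ENNReal.ofReal_add (hg _ _) (hh _ _), ENNReal.tsum_add]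

theorem Gadm.const_mul (hg : Gadm ν g) {c : ℝ} (hc : 0 ≤ c) : Gadm ν fun n y => c * g n y := by
  obtain ⟨hmeas, hnonneg, hint, hsum⟩ := hg
  refine ⟨fun n => (hmeas n).const_mul c, fun n y => mul_nonneg hc (hnonneg n y),
    fun n => (hint n).const_mul c, ?_⟩
  simpa only [integral_const_mul] using hsum.mul_left c

theorem Gadm.add (hg : Gadm ν g) (hh : Gadm ν h) : Gadm ν fun n y => g n y + h n y := by
  obtain ⟨hgm, hg0, hgi, hgs⟩ := hg
  obtain ⟨hhm, hh0, hhi, hhs⟩ := hh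
  refine ⟨fun n => (hgm n).add (hhm n), fun n y => add_nonneg (hg0 n y) (hh0 n y),
    fun n => (hgi n).add (hhi n), ?_⟩
  simpa only [integral_add (hgi _) (hhi _)] using hgs.add hhs

theorem gadm_const [∀ n, IsProbabilityMeasure (ν n)] {c : ℕ → ℝ} (hc : ∀ n, 0 ≤ c n)
    (hcs : Summable c) : Gadm ν fun n (_ : X n) => c n :=
  ⟨fun _ => measurable_const, fun n _ => hc n, fun _ => integrable_const _, by simpa using hcs⟩

theorem bigB_of_abs_le {f : (∀ n, X n) → ℝ} (hf : Measurable f) (hg : Gadm ν g)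
    (hfg : ∀ x, oplus g x ≠ ⊤ → |f x| ≤ (oplus g x).toReal) : BigB ν f :=
  ⟨hf, g, hg, fun x => or_iff_not_imp_left.2 (hfg x)⟩

theorem Gadm.bigB_toReal_oplus (hg : Gadm ν g) : BigB ν fun x => (oplus g x).toReal :=
  bigB_of_abs_le
    (ENNReal.measurable_toReal.comp <| Measurable.tsum fun n =>
      ENNReal.measurable_ofReal.comp ((hg.1 n).comp (measurable_pi_apply n)))
    hg fun _ _ => (abs_of_nonneg ENNReal.toReal_nonneg).le

theorem BigB.const [∀ n, IsProbabilityMeasure (ν n)] (a : ℝ) : BigB ν fun _ => a := by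
  have hsingle : HasSum (Pi.single 0 |a| : ℕ → ℝ) |a| := hasSum_pi_single 0 |a|
  have hc : 0 ≤ (Pi.single 0 |a| : ℕ → ℝ) := Pi.single_nonneg.2 (abs_nonneg a)
  refine bigB_of_abs_le measurable_const (gadm_const hc hsingle.summable) fun x _ => ?_
  rw [toReal_oplus fun n _ => hc n, hsingle.tsum_eq]

theorem BigB.const_mul {f : (∀ n, X n) → ℝ} (hf : BigB ν f) (c : ℝ) :
    BigB ν fun x => c * f x := by
  obtain ⟨hmeas, g, hg, hfg⟩ := hf
  have hc : 0 < |c| + 1 := by positivity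
  refine bigB_of_abs_le (hmeas.const_mul c) (hg.const_mul hc.le) fun x hx => ?_
  have hgx : |f x| ≤ (oplus g x).toReal :=
    (hfg x).resolve_left fun htop => hx (oplus_const_mul_eq_top hc htop)
  rw [toReal_oplus_const_mul hc.le, abs_mul]
  exact mul_le_mul (by linarith) hgx (abs_nonneg _) hc.le

theorem BigB.add {f₁ f₂ : (∀ n, X n) → ℝ} (hf₁ : BigB ν f₁) (hf₂ : BigB ν f₂) :
    BigB ν fun x => f₁ x + f₂ x := by
  obtain ⟨hm₁, g₁, hg₁, hfg₁⟩ := hf₁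
  obtain ⟨hm₂, g₂, hg₂, hfg₂⟩ := hf₂
  refine bigB_of_abs_le (hm₁.add hm₂) (hg₁.add hg₂) fun x hx => ?_
  rw [oplus_add hg₁.2.1 hg₂.2.1] at hx ⊢
  obtain ⟨hx₁, hx₂⟩ := ENNReal.add_ne_top.1 hx
  rw [ENNReal.toReal_add hx₁ hx₂]
  exact (abs_add_le _ _).trans (add_le_add ((hfg₁ x).resolve_left hx₁) ((hfg₂ x).resolve_left hx₂))

theorem BigB.sub {f₁ f₂ : (∀ n, X n) → ℝ} (hf₁ : BigB ν f₁) (hf₂ : BigB ν f₂) :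
    BigB ν fun x => f₁ x - f₂ x := by
  simpa [sub_eq_add_neg] using hf₁.add (hf₂.const_mul (-1))

end Oplus

section Truncation

variable {ν : ∀ n, Measure (X n)} {g : ∀ n, X n → ℝ}

theorem Gadm.tendsto_tsum_integral_max_sub (hg : Gadm ν g) {w : ℕ → ℝ} (hw : ∀ n, 0 < w n) :
    Tendsto (fun t : ℝ => ∑' n, ∫ y, max (g n y - t * w n) 0 ∂ν n) atTop (𝓝 0) := by
  have h := tendsto_tsum_of_dominated_convergence (𝓕 := atTop) (g := fun _ => (0 : ℝ)) hg.2.2.2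
    (fun n => (tendsto_integral_max_sub_atTop (hg.2.2.1 n)).comp
      (tendsto_id.atTop_mul_const (hw n))) ?_
  · simpa using h
  · filter_upwards [eventually_ge_atTop 0] with t ht n
    change ‖∫ y, max (g n y - t * w n) 0 ∂ν n‖ ≤ _
    rw [Real.norm_of_nonneg (by positivity)]
    refine integral_mono_of_nonneg (Eventually.of_forall fun y => le_max_right _ _)
      (hg.2.2.1 n) (Eventually.of_forall fun y => ?_)
    exact max_le (sub_le_self _ (mul_nonneg ht (hw n).le)) (hg.2.1 n y)

variable [∀ n, IsProbabilityMeasure (ν n)] {L : ℕ → ℝ}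

theorem Gadm.max_const_sub (hg : Gadm ν g) (hL : ∀ n, 0 ≤ L n) (hLs : Summable L) :
    Gadm ν fun n y => max (L n - g n y) 0 := by
  have hle : ∀ n y, max (L n - g n y) 0 ≤ L n := fun n y =>
    max_le (by linarith [hg.2.1 n y]) (hL n)
  have hint : ∀ n, Integrable (fun y => max (L n - g n y) 0) (ν n) := fun n =>
    ((integrable_const (L n)).sub (hg.2.2.1 n)).pos_part
  refine ⟨fun n => (measurable_const.sub (hg.1 n)).max measurable_const,
    fun n y => le_max_right _ _, hint, ?_⟩
  refine hLs.of_nonneg_of_le (fun n => integral_nonneg fun y => le_max_right _ _) fun n => ?_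
  simpa using integral_mono (hint n) (integrable_const (L n)) (hle n)

theorem Gadm.integral_max_const_sub (hg : Gadm ν g) (n : ℕ) :
    ∫ y, max (L n - g n y) 0 ∂ν n
      = L n - ∫ y, g n y ∂ν n + ∫ y, max (g n y - L n) 0 ∂ν n := by
  have hsplit : ∀ y, max (L n - g n y) 0 = L n - g n y + max (g n y - L n) 0 := fun y => by
    rcases le_total (g n y) (L n) with h | h
    · rw [max_eq_left (by linarith), max_eq_right (by linarith)]; ring
    · rw [max_eq_right (by linarith), max_eq_left (by linarith)]; ring
  simp_rw [hsplit]
  rw [integral_add (f := fun y => L n - g n y) (g := fun y => max (g n y - L n) 0)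
      ((integrable_const _).sub (hg.2.2.1 n)) ((hg.2.2.1 n).sub (integrable_const _)).pos_part,
    integral_sub (integrable_const _) (hg.2.2.1 n)]
  simp

theorem Gadm.tsum_integral_sub_toReal_oplus_le (hg : Gadm ν g) (hL : ∀ n, 0 ≤ L n)
    (hLs : Summable L) {x : ∀ n, X n} (hx : oplus g x ≠ ⊤) :
    ∑' n, ∫ y, g n y ∂ν n - (oplus g x).toReal
      ≤ ∑' n, (∫ y, g n y ∂ν n - L n)
        + (oplus (fun n y => max (L n - g n y) 0) x).toReal := by
  have hh := hg.max_const_sub hL hLs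
  rw [toReal_oplus hg.2.1, toReal_oplus hh.2.1]
  refine hasSum_le (fun n => ?_) (hg.2.2.2.hasSum.sub (summable_of_oplus_ne_top hg.2.1 hx).hasSum)
    ((hg.2.2.2.sub hLs).hasSum.add
      (hLs.of_nonneg_of_le (fun n => hh.2.1 n (x n))
        fun n => max_le (by linarith [hg.2.1 n (x n)]) (hL n)).hasSum)
  linarith [le_max_left (L n - g n (x n)) 0]

theorem Gadm.tsum_integral_sub_add_tsum_integral_max_const_sub (hg : Gadm ν g)
    (hL : ∀ n, 0 ≤ L n) (hLs : Summable L) :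
    ∑' n, (∫ y, g n y ∂ν n - L n) + ∑' n, ∫ y, max (L n - g n y) 0 ∂ν n
      = ∑' n, ∫ y, max (g n y - L n) 0 ∂ν n := by
  have hexcess : Summable fun n => ∫ y, max (g n y - L n) 0 ∂ν n := by
    refine hg.2.2.2.of_nonneg_of_le (fun n => integral_nonneg fun y => le_max_right _ _)
      fun n => integral_mono ((hg.2.2.1 n).sub (integrable_const _)).pos_part (hg.2.2.1 n)
        fun y => max_le (by linarith [hL n]) (hg.2.1 n y)
  simp_rw [hg.integral_max_const_sub]
  rw [← (hg.2.2.2.sub hLs).tsum_add (((hLs.sub hg.2.2.2).add hexcess))]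
  exact tsum_congr fun n => by ring

end Truncation

section Functional

variable {ν : ∀ n, Measure (X n)} {ψ φ : ((∀ n, X n) → ℝ) → ℝ} {C : ℝ}

theorem le_add_tsum_integral_of_le_add_oplus
    (hsmul : ∀ f, BigB ν f → ∀ c : ℝ, ψ (fun x => c * f x) = c * ψ f)
    (hdom : ∀ f, BigB ν f → ∀ (m : ℝ) (g : ∀ n, X n → ℝ), Gadm ν g →
      (∀ x, oplus g x = ⊤ ∨ f x ≤ m + (oplus g x).toReal) →
      φ f ≤ m + ∑' n, ∫ x, g n x ∂ν n)
    (hbound : ∀ f, BigB ν f → ψ f - φ f ≤ C)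
    {f : (∀ n, X n) → ℝ} (hf : BigB ν f) {m : ℝ} {h : ∀ n, X n → ℝ} (hh : Gadm ν h)
    (hfh : ∀ x, oplus h x = ⊤ ∨ f x ≤ m + (oplus h x).toReal) :
    ψ f ≤ m + ∑' n, ∫ y, h n y ∂ν n := by
  refine le_of_forall_pos_mul_le_add (C := C) fun c hc => ?_
  have hcfh : ∀ x, oplus (fun n y => c * h n y) x = ⊤ ∨
      c * f x ≤ c * m + (oplus (fun n y => c * h n y) x).toReal := fun x => by
    rcases hfh x with htop | hle
    · exact Or.inl (oplus_const_mul_eq_top hc htop)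
    · rw [toReal_oplus_const_mul hc.le, ← mul_add]
      exact Or.inr (mul_le_mul_of_nonneg_left hle hc.le)
  have hφ := hdom _ (hf.const_mul c) (c * m) _ (hh.const_mul hc.le) hcfh
  simp_rw [integral_const_mul, tsum_mul_left] at hφ
  have hψ := hbound _ (hf.const_mul c)
  rw [hsmul f hf c] at hψ
  linarith

theorem map_const_eq [∀ n, IsProbabilityMeasure (ν n)]
    (hsmul : ∀ f, BigB ν f → ∀ c : ℝ, ψ (fun x => c * f x) = c * ψ f)
    (hdom : ∀ f, BigB ν f → ∀ (m : ℝ) (g : ∀ n, X n → ℝ), Gadm ν g →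
      (∀ x, oplus g x = ⊤ ∨ f x ≤ m + (oplus g x).toReal) →
      φ f ≤ m + ∑' n, ∫ x, g n x ∂ν n)
    (hbound : ∀ f, BigB ν f → ψ f - φ f ≤ C) (a : ℝ) :
    ψ (fun _ => a) = a := by
  have hle : ∀ t : ℝ, ψ (fun _ => t) ≤ t := fun t => by
    simpa [oplus] using le_add_tsum_integral_of_le_add_oplus hsmul hdom hbound (BigB.const t)
      (gadm_const (fun _ => le_rfl) summable_zero) fun x => Or.inr (by simp [oplus])
  have hneg : ψ (fun _ => -a) = -ψ (fun _ => a) := by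
    simpa using hsmul _ (BigB.const a) (-1)
  linarith [hle a, hle (-a)]

theorem map_sub_of_linear
    (hadd : ∀ f₁ f₂, BigB ν f₁ → BigB ν f₂ → ψ (fun x => f₁ x + f₂ x) = ψ f₁ + ψ f₂)
    (hsmul : ∀ f, BigB ν f → ∀ c : ℝ, ψ (fun x => c * f x) = c * ψ f)
    {f₁ f₂ : (∀ n, X n) → ℝ} (hf₁ : BigB ν f₁) (hf₂ : BigB ν f₂) :
    ψ (fun x => f₁ x - f₂ x) = ψ f₁ - ψ f₂ := by
  have h := hadd _ _ hf₁ (hf₂.const_mul (-1))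
  rw [hsmul f₂ hf₂] at h
  simpa only [neg_one_mul, ← sub_eq_add_neg] using h

end Functional

theorem stmt10_general (ν : ∀ n, Measure (X n)) (hν : ∀ n, IsProbabilityMeasure (ν n))
    (ψ φ : ((∀ n, X n) → ℝ) → ℝ) (Cst : ℝ)
    (hadd : ∀ f₁ f₂, BigB ν f₁ → BigB ν f₂ → ψ (fun x => f₁ x + f₂ x) = ψ f₁ + ψ f₂)
    (hsmul : ∀ f, BigB ν f → ∀ c : ℝ, ψ (fun x => c * f x) = c * ψ f)
    (hdom : ∀ f, BigB ν f → ∀ (m : ℝ) (g : ∀ n, X n → ℝ), Gadm ν g →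
      (∀ x, oplus g x = ⊤ ∨ f x ≤ m + (oplus g x).toReal) →
      φ f ≤ m + ∑' n, ∫ x, g n x ∂ν n)
    (hbound : ∀ f, BigB ν f → ψ f - φ f ≤ Cst)
    (g : ∀ n, X n → ℝ) (hg : Gadm ν g) (hfin : ∀ x, oplus g x ≠ ⊤) :
    ψ (fun x => (oplus g x).toReal) = ∑' n, ∫ x, g n x ∂ν n := by
  set S := ∑' n, ∫ x, g n x ∂ν n
  have hF := hg.bigB_toReal_oplus
  refine le_antisymm ?_ (sub_nonpos.1 ?_)
  · simpa using le_add_tsum_integral_of_le_add_oplus hsmul hdom hbound hF (m := 0) hg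
      fun x => Or.inr (by simp)
  have hw : ∀ n : ℕ, (0 : ℝ) < 2⁻¹ ^ n := fun n => by positivity
  refine ge_of_tendsto (hg.tendsto_tsum_integral_max_sub hw) ?_
  filter_upwards [eventually_ge_atTop 0] with t ht
  have hL : ∀ n, 0 ≤ t * 2⁻¹ ^ n := fun n => mul_nonneg ht (hw n).le
  have hLs : Summable fun n : ℕ => t * 2⁻¹ ^ n :=
    (summable_geometric_of_lt_one (by norm_num) (by norm_num)).mul_left t
  rw [← map_const_eq hsmul hdom hbound S, ← map_sub_of_linear hadd hsmul
    (BigB.const S) hF, ← hg.tsum_integral_sub_add_tsum_integral_max_const_sub hL hLs]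
  exact le_add_tsum_integral_of_le_add_oplus hsmul hdom hbound ((BigB.const S).sub hF)
    (hg.max_const_sub hL hLs)
    fun x => Or.inr (hg.tsum_integral_sub_toReal_oplus_le hL hLs (hfin x))

/-- If `ψ` is a positive linear functional on `B(ν)` dominated (up to a finite constant)
by an increasing convex `φ` satisfying the marginal domination condition, then
`ψ(⊕g) = Σ_n ∫ g_n dν_n` for every `⊕g ∈ G(ν) ∩ B(ν)`. -/
theorem stmt10 (ν : ∀ n, Measure (X n)) (hν : ∀ n, IsProbabilityMeasure (ν n))
    (ψ φ : ((∀ n, X n) → ℝ) → ℝ) (Cst : ℝ)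
    (hadd : ∀ f₁ f₂, BigB ν f₁ → BigB ν f₂ → ψ (fun x => f₁ x + f₂ x) = ψ f₁ + ψ f₂)
    (hsmul : ∀ f, BigB ν f → ∀ c : ℝ, ψ (fun x => c * f x) = c * ψ f)
    (hpos : ∀ f, BigB ν f → (∀ x, 0 ≤ f x) → 0 ≤ ψ f)
    (hmono : ∀ f₁ f₂, BigB ν f₁ → BigB ν f₂ → (∀ x, f₁ x ≤ f₂ x) → φ f₁ ≤ φ f₂)
    (hconv : ∀ f₁ f₂, BigB ν f₁ → BigB ν f₂ → ∀ t : ℝ, 0 ≤ t → t ≤ 1 →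
      φ (fun x => t * f₁ x + (1 - t) * f₂ x) ≤ t * φ f₁ + (1 - t) * φ f₂)
    (hdom : ∀ f, BigB ν f → ∀ (m : ℝ) (g : ∀ n, X n → ℝ), Gadm ν g →
      (∀ x, oplus g x = ⊤ ∨ f x ≤ m + (oplus g x).toReal) →
      φ f ≤ m + ∑' n, ∫ x, g n x ∂ν n)
    (hbound : ∀ f, BigB ν f → ψ f - φ f ≤ Cst)
    (g : ∀ n, X n → ℝ) (hg : Gadm ν g) (hfin : ∀ x, oplus g x ≠ ⊤) :
    ψ (fun x => (oplus g x).toReal) = ∑' n, ∫ x, g n x ∂ν n :=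
  stmt10_general ν hν ψ φ Cst hadd hsmul hdom hbound g hg hfin
end

section
/- (Duality gap for countable products) Let X = {0,1}^ℕ with ν_n = (δ_0 + δ_1)/2 on each factor, and f := liminf_n π_n where π_n is the n-th coordinate. Then sup_{μ ∈ 𝒫(ν)} ∫ f dμ ≤ 1/2, while the superreplication value φ(f) := inf{m + Σ_n ∫ g_n dν_n : m ∈ ℝ, g_n : {0,1} → ℝ₊, Σ_n ∫ g_n dν_n < ∞, m + Σ_n g_n(x_n) ≥ f(x) for all x} satisfies φ(f) ≥ 1. In particular there is a duality gap for this bounded Borel f. -/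
set_option autoImplicit false

open MeasureTheory Filter Topology ENNReal

private lemma liminf_bool_one (x : ℕ → Bool) (h : ∀ᶠ n in atTop, x n = true) :
    Filter.liminf (fun n => if x n then (1 : ℝ) else 0) atTop = 1 := by
  have h1 : Filter.liminf (fun _ : ℕ => (1:ℝ)) atTop = 1 := Filter.liminf_const 1
  rw [← h1]
  exact Filter.liminf_congr (h.mono fun n hn => by simp [hn])

private lemma liminf_bool_zero (x : ℕ → Bool) (h : ¬ ∀ᶠ n in atTop, x n = true) :
    Filter.liminf (fun n => if x n then (1 : ℝ) else 0) atTop = 0 := by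
  have hfreq : ∃ᶠ n in atTop, x n = false := by
    rw [Filter.not_eventually] at h
    exact h.mono fun n hn => by simpa using hn
  have hbdd : IsBoundedUnder (· ≥ ·) atTop (fun n => if x n then (1:ℝ) else 0) :=
    Filter.isBoundedUnder_of ⟨0, fun n => by positivity⟩
  have hbdd' : IsBoundedUnder (· ≤ ·) atTop (fun n => if x n then (1:ℝ) else 0) :=
    Filter.isBoundedUnder_of ⟨1, fun n => by split <;> norm_num⟩
  apply le_antisymm
  · exact Filter.liminf_le_of_frequently_le (hfreq.mono fun n hn => by simp [hn]) hbdd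
  · exact Filter.le_liminf_of_le hbdd'.isCoboundedUnder_ge
      (Filter.Eventually.of_forall fun n => by positivity)

private lemma integral_bool_half (g : Bool → ℝ) :
    ∫ b, g b ∂((2⁻¹ : ℝ≥0∞) • (Measure.dirac false + Measure.dirac true)) =
      (g false + g true) / 2 := by
  rw [integral_smul_measure, integral_add_measure Integrable.of_finite Integrable.of_finite]
  simp [integral_dirac]; ring

private lemma tail_small (u : ℕ → ℝ) (hu : Summable u) (ε : ℝ) (hε : 0 < ε) :
    ∃ N, ∑' n, u (n + N) < ε := by
  have htail : Filter.Tendsto (fun N => ∑' n, u (n + N)) atTop (nhds 0) := by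
    have h1 : ∀ N : ℕ, ∑' n, u (n + N) = (∑' n, u n) - ∑ i ∈ Finset.range N, u i := by
      intro N
      have := Summable.sum_add_tsum_nat_add N hu
      linarith
    simp_rw [h1]
    have h2 := hu.hasSum.tendsto_sum_nat
    have h3 : Filter.Tendsto (fun N => (∑' n, u n) - ∑ i ∈ Finset.range N, u i) atTop
        (nhds ((∑' n, u n) - (∑' n, u n))) := Filter.Tendsto.const_sub _ h2
    simpa using h3
  exact (htail.eventually (eventually_lt_nhds hε)).exists

/-- Duality gap on `{0,1}^ℕ`: with uniform marginals `ν_n = (δ_0 + δ_1)/2` and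
`f = liminf_n π_n`, every coupling satisfies `∫ f dμ ≤ 1/2`, while every
superreplication `m + ⊕g ≥ f` with `⊕g ∈ G(ν)` has cost `m + Σ_n ∫ g_n dν_n ≥ 1`. -/
theorem stmt12 (νb : Measure Bool)
    (hνb : νb = (2⁻¹ : ℝ≥0∞) • (Measure.dirac false + Measure.dirac true))
    (f : (ℕ → Bool) → ℝ)
    (hf : f = fun x => Filter.liminf (fun n => if x n then (1 : ℝ) else 0) atTop) :
    (∀ μ : Measure (ℕ → Bool), IsProbabilityMeasure μ →
      (∀ n, μ.map (fun x => x n) = νb) → (∫ x, f x ∂μ) ≤ 1 / 2) ∧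
    ∀ (m : ℝ) (g : ℕ → Bool → ℝ), (∀ n b, 0 ≤ g n b) →
      Summable (fun n => ∫ b, g n b ∂νb) →
      (∀ x : ℕ → Bool, (∑' n, ENNReal.ofReal (g n (x n))) = ⊤ ∨
        f x ≤ m + (∑' n, ENNReal.ofReal (g n (x n))).toReal) →
      1 ≤ m + ∑' n, ∫ b, g n b ∂νb := by
  subst hνb hf
  constructor
  · -- Part 1
    intro μ hμprob hμ
    set A : Set (ℕ → Bool) := {x | ∀ᶠ n in atTop, x n = true} with hAdef
    set B : ℕ → Set (ℕ → Bool) := fun N => {x | ∀ n, N ≤ n → x n = true} with hB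
    have hmeasB : ∀ N, MeasurableSet (B N) := by
      intro N
      have : B N = ⋂ n, ⋂ (_ : N ≤ n), (fun x : ℕ → Bool => x n) ⁻¹' {true} := by
        ext x; simp [hB]
      rw [this]
      exact MeasurableSet.iInter fun n => MeasurableSet.iInter fun _ =>
        (measurable_pi_apply n) (measurableSet_singleton true)
    have hmono : Monotone B := fun N M hNM x hx n hn => hx n (hNM.trans hn)
    have hA : A = ⋃ N, B N := by
      ext x; simp [Filter.eventually_atTop, hAdef, hB]
    have hmeasA : MeasurableSet A := hA ▸ MeasurableSet.iUnion hmeasB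
    have hμA : μ A ≤ 1/2 := by
      rw [hA, (hmono.directed_le).measure_iUnion]
      apply iSup_le; intro N
      have hsub : B N ⊆ (fun x : ℕ → Bool => x N) ⁻¹' {true} := fun x hx => hx N le_rfl
      calc μ (B N) ≤ μ ((fun x : ℕ → Bool => x N) ⁻¹' {true}) := measure_mono hsub
        _ = (μ.map (fun x => x N)) {true} := by
            rw [Measure.map_apply (measurable_pi_apply N) (measurableSet_singleton true)]
        _ = 1/2 := by
            rw [hμ N]
            simp [Measure.dirac_apply]
    have hfi : (fun x : ℕ → Bool =>
        Filter.liminf (fun n => if x n then (1:ℝ) else 0) atTop)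
        = A.indicator (fun _ => (1:ℝ)) := by
      funext x
      by_cases hx : x ∈ A
      · rw [Set.indicator_of_mem hx]
        exact liminf_bool_one x hx
      · rw [Set.indicator_of_notMem hx]
        exact liminf_bool_zero x hx
    rw [hfi, integral_indicator_const _ hmeasA, smul_eq_mul, mul_one]
    calc (μ A).toReal ≤ ((1:ℝ≥0∞)/2).toReal :=
          ENNReal.toReal_mono (by norm_num) hμA
      _ = 1/2 := by norm_num
  · -- Part 2
    intro m g hg hsum hsup
    classical
    set νb : Measure Bool := (2⁻¹ : ℝ≥0∞) • (Measure.dirac false + Measure.dirac true)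
    set I : ℕ → ℝ := fun n => ∫ b, g n b ∂νb with hIdef
    have hI : ∀ n, I n = (g n false + g n true) / 2 := fun n => integral_bool_half (g n)
    have hInonneg : ∀ n, 0 ≤ I n := by
      intro n; rw [hI n]; have := hg n false; have := hg n true; linarith
    have hgT_le : ∀ n, g n true ≤ 2 * I n := by
      intro n; rw [hI n]; have := hg n false; linarith
    have hsumT : Summable (fun n => g n true) :=
      Summable.of_nonneg_of_le (fun n => hg n true) hgT_le (hsum.mul_left 2)
    set S : ℝ := ∑' n, I n with hS
    -- suffices: ∀ ε > 0, 1 ≤ m + S + ε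
    have key : ∀ ε : ℝ, 0 < ε → 1 ≤ m + S + ε := by
      intro ε hε
      obtain ⟨N, hN⟩ := tail_small _ hsumT ε hε
      set x : ℕ → Bool := fun n => if N ≤ n then true else
        (if g n true ≤ g n false then true else false) with hx
      set u : ℕ → ℝ := fun n => g n (x n) with hu
      set v : ℕ → ℝ := fun n => if N ≤ n then g n true else I n with hv
      have huv : ∀ n, u n ≤ v n := by
        intro n
        by_cases hn : N ≤ n
        · simp [hu, hv, hx, hn]
        · by_cases hc : g n true ≤ g n false <;>
            simp [hu, hv, hx, hn, hc, hI n] <;> linarith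
      have hunn : ∀ n, 0 ≤ u n := fun n => hg n (x n)
      have hsumv : Summable v := by
        apply Summable.of_nonneg_of_le (fun n => ?_) (fun n => ?_) (hsumT.add hsum)
        · by_cases hn : N ≤ n <;> simp [hv, hn, hg n true, hInonneg n]
        · by_cases hn : N ≤ n <;> simp [hv, hn] <;>
            [skip; skip] <;> first
            | linarith [hInonneg n, hg n true]
      have hsumu : Summable u := Summable.of_nonneg_of_le hunn huv hsumv
      have htsum_uv : ∑' n, u n ≤ ∑' n, v n := Summable.tsum_le_tsum huv hsumu hsumv
      have htsum_v : ∑' n, v n ≤ S + ε := by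
        have hsplit := Summable.sum_add_tsum_nat_add N hsumv
        have h1 : ∀ i ∈ Finset.range N, v i = I i := by
          intro i hi
          simp [hv, Nat.not_le.mpr (Finset.mem_range.mp hi)]
        have h2 : ∀ n : ℕ, v (n + N) = g (n + N) true := by
          intro n; simp [hv, Nat.le_add_left N n]
        have h3 : ∑ i ∈ Finset.range N, v i ≤ S := by
          rw [Finset.sum_congr rfl h1]
          exact Summable.sum_le_tsum _ (fun i _ => hInonneg i) hsum
        have h4 : ∑' n, v (n + N) < ε := by
          simp_rw [h2]; exact hN
        linarith
      -- the ENNReal sum is finite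
      have hofReal : (∑' n, ENNReal.ofReal (g n (x n))) = ENNReal.ofReal (∑' n, u n) :=
        (ENNReal.ofReal_tsum_of_nonneg hunn hsumu).symm
      rcases hsup x with htop | hle
      · rw [hofReal] at htop
        exact absurd htop ENNReal.ofReal_ne_top
      · have hfx : Filter.liminf (fun n => if x n then (1:ℝ) else 0) atTop = 1 :=
          liminf_bool_one x (Filter.eventually_atTop.mpr ⟨N, fun n hn => by simp [hx, hn]⟩)
        dsimp only at hle
        rw [hfx, hofReal, ENNReal.toReal_ofReal (tsum_nonneg hunn)] at hle
        linarith
    exact le_of_forall_pos_le_add key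
end

section
/- Let (Ω, ℱ, (ℱ_n)_{n=0}^N, μ) be a filtered probability space, S_n ≥ 0 adapted and μ-integrable with (1−ε) S_n ≤ E^μ[S_N | ℱ_n] ≤ (1+ε) S_n for all n ≤ N and some ε ≥ 0, and let h_n be ℱ_{n−1}-measurable with h_0 = 0. Define Y_n := Σ_{k=1}^n [(h_k − h_{k−1})(S̃_n − S_{k−1}) − ε|h_k − h_{k−1}| S_{k−1}] where S̃_n := E^μ[S_N | ℱ_n]. If E^μ[Y_N⁻] < ∞, then E^μ[Y_N] ≤ 0; i.e., the terminal gains with proportional transaction costs have nonpositive expectation under any consistent price system. -/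
set_option autoImplicit false

open MeasureTheory Filter Topology ENNReal

/-!
Summation by parts splits `Y_N` into the martingale transform `X_N = Σ h_k (S̃_k − S̃_{k−1})` of
the martingale `S̃_n = E[S_N | ℱ_n]` plus terms
`(h_k − h_{k−1})(S̃_{k−1} − S_{k−1}) − ε|h_k − h_{k−1}| S_{k−1}`, each nonpositive because
`|S̃_n − S_n| ≤ ε S_n`. Hence `Y_N ≤ X_N` and `X_N⁻` is integrable, and it remains to see that a
martingale transform with integrable terminal negative part is integrable with mean zero.
Induct on the horizon: cut `Ω` into `ℱ_n`-measurable pieces on which `h_{n+1}` and `X_n` are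
bounded. On each piece the increment `h_{n+1}(S̃_{n+1} − S̃_n)` is integrable with zero integral;
this bounds `E[X_n⁻]` by `E[X_{n+1}⁻]`, so `X_n` is integrable by induction, and then bounds the
positive part of the increment by its negative part, which is integrable.
-/

namespace MeasureTheory

variable {Ω : Type*} {m0 : MeasurableSpace Ω} {μ : Measure Ω}

lemma ofReal_integral_le_lintegral_ofReal (f : Ω → ℝ) :
    ENNReal.ofReal (∫ ω, f ω ∂μ) ≤ ∫⁻ ω, ENNReal.ofReal (f ω) ∂μ := by
  by_cases hf : Integrable f μ
  · refine ENNReal.ofReal_le_of_le_toReal ?_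
    rw [integral_eq_lintegral_pos_part_sub_lintegral_neg_part hf]
    exact sub_le_self _ ENNReal.toReal_nonneg
  · simp [integral_undef hf]

lemma Integrable.lintegral_ofReal_eq_of_integral_eq_zero {f : Ω → ℝ} (hf : Integrable f μ)
    (h0 : ∫ ω, f ω ∂μ = 0) :
    ∫⁻ ω, ENNReal.ofReal (f ω) ∂μ = ∫⁻ ω, ENNReal.ofReal (-f ω) ∂μ := by
  rw [integral_eq_lintegral_pos_part_sub_lintegral_neg_part hf, sub_eq_zero] at h0
  exact (ENNReal.toReal_eq_toReal_iff' hf.lintegral_lt_top.ne hf.neg.lintegral_lt_top.ne).1 h0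

lemma integrable_of_lintegral_ofReal_lt_top {f : Ω → ℝ} (hf : AEStronglyMeasurable f μ)
    (hpos : ∫⁻ ω, ENNReal.ofReal (f ω) ∂μ < ∞) (hneg : ∫⁻ ω, ENNReal.ofReal (-f ω) ∂μ < ∞) :
    Integrable f μ := by
  refine ⟨hf, ?_⟩
  have habs : ∀ ω, ‖f ω‖ₑ = ENNReal.ofReal (f ω) + ENNReal.ofReal (-f ω) := fun ω => by
    rw [Real.enorm_eq_ofReal_abs]
    rcases le_total 0 (f ω) with h | h
    · simp [abs_of_nonneg h, ENNReal.ofReal_of_nonpos (neg_nonpos.2 h)]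
    · simp [abs_of_nonpos h, ENNReal.ofReal_of_nonpos h]
  simp only [HasFiniteIntegral, habs]
  rw [lintegral_add_left' hf.aemeasurable.ennreal_ofReal]
  exact ENNReal.add_lt_top.2 ⟨hpos, hneg⟩

lemma lintegral_le_of_forall_bounded_setLIntegral_le {𝒢 : MeasurableSpace Ω} (hm : 𝒢 ≤ m0)
    {φ : Ω → ℝ} (hφ : Measurable[𝒢] φ) {F G : Ω → ℝ≥0∞}
    (h : ∀ (s : Set Ω) (c : ℝ), MeasurableSet[𝒢] s → (∀ ω ∈ s, |φ ω| ≤ c) →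
      ∫⁻ ω in s, F ω ∂μ ≤ ∫⁻ ω in s, G ω ∂μ) :
    ∫⁻ ω, F ω ∂μ ≤ ∫⁻ ω, G ω ∂μ := by
  set A : ℕ → Set Ω := fun m => (fun ω => ⌊|φ ω|⌋₊) ⁻¹' {m}
  have hA : ∀ m, MeasurableSet[𝒢] (A m) := fun m =>
    (Nat.measurable_floor.comp hφ.abs) (measurableSet_singleton m)
  have hdisj : Pairwise (Function.onFun Disjoint A) := fun i j hij =>
    Set.disjoint_left.2 fun ω hi hj => hij (hi.symm.trans hj)
  have hunion : ⋃ m, A m = Set.univ := Set.iUnion_eq_univ_iff.2 fun ω => ⟨_, rfl⟩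
  have hbound : ∀ m, ∀ ω ∈ A m, |φ ω| ≤ m + 1 := fun m ω hω =>
    (Nat.lt_floor_add_one |φ ω|).le.trans_eq (by rw [show ⌊|φ ω|⌋₊ = m from hω])
  have hsum : ∀ H : Ω → ℝ≥0∞, ∫⁻ ω, H ω ∂μ = ∑' m, ∫⁻ ω in A m, H ω ∂μ := fun H => by
    rw [← lintegral_iUnion (fun m => hm _ (hA m)) hdisj, hunion, Measure.restrict_univ]
  rw [hsum F, hsum G]
  exact ENNReal.tsum_le_tsum fun m => h _ _ (hA m) (hbound m)

lemma integrableOn_mul_of_bounded {g d : Ω → ℝ} (hg : AEStronglyMeasurable g μ)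
    (hd : Integrable d μ) {s : Set Ω} (hs : MeasurableSet s) {c : ℝ} (hc : ∀ ω ∈ s, |g ω| ≤ c) :
    IntegrableOn (fun ω => g ω * d ω) s μ :=
  hd.integrableOn.bdd_mul hg.restrict (ae_restrict_of_forall_mem hs hc)

section ConditionallyCentred

variable [IsFiniteMeasure μ] {𝒢 : MeasurableSpace Ω} {g d : Ω → ℝ}

lemma integral_mul_eq_zero_of_condExp_eq_zero (hm : 𝒢 ≤ m0) (hg : StronglyMeasurable[𝒢] g)
    (hgd : Integrable (g * d) μ) (hd : Integrable d μ) (hd0 : μ[d | 𝒢] =ᵐ[μ] 0) :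
    ∫ ω, g ω * d ω ∂μ = 0 := by
  calc ∫ ω, g ω * d ω ∂μ = ∫ ω, (μ[g * d | 𝒢]) ω ∂μ := (integral_condExp hm).symm
    _ = ∫ ω, (g * μ[d | 𝒢]) ω ∂μ :=
        integral_congr_ae (condExp_mul_of_stronglyMeasurable_left hg hgd hd)
    _ = 0 := integral_eq_zero_of_ae (by filter_upwards [hd0] with ω hω; simp [hω])

lemma setIntegral_mul_eq_zero_of_condExp_eq_zero (hm : 𝒢 ≤ m0) (hg : StronglyMeasurable[𝒢] g)
    (hd : Integrable d μ) (hd0 : μ[d | 𝒢] =ᵐ[μ] 0) {s : Set Ω} (hs : MeasurableSet[𝒢] s)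
    {c : ℝ} (hc : ∀ ω ∈ s, |g ω| ≤ c) :
    ∫ ω in s, g ω * d ω ∂μ = 0 := by
  have hgs : StronglyMeasurable[𝒢] (s.indicator g) := hg.indicator hs
  have hgs_bound : ∀ ω, ‖s.indicator g ω‖ ≤ |c| := fun ω => by
    by_cases hω : ω ∈ s
    · simpa [hω] using (hc ω hω).trans (le_abs_self c)
    · simp [hω]
  rw [← integral_indicator (hm _ hs)]
  simp only [Set.indicator_mul_left]
  exact integral_mul_eq_zero_of_condExp_eq_zero hm hgs
    (hd.bdd_mul (hgs.mono hm).aestronglyMeasurable (ae_of_all _ hgs_bound)) hd hd0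

lemma integrable_mul_of_condExp_eq_zero (hm : 𝒢 ≤ m0) (hg : StronglyMeasurable[𝒢] g)
    (hd : Integrable d μ) (hd0 : μ[d | 𝒢] =ᵐ[μ] 0)
    (hneg : ∫⁻ ω, ENNReal.ofReal (-(g ω * d ω)) ∂μ < ∞) :
    Integrable (fun ω => g ω * d ω) μ := by
  have hgm : AEStronglyMeasurable[m0] g μ := (hg.mono hm).aestronglyMeasurable
  refine integrable_of_lintegral_ofReal_lt_top (hgm.mul hd.1) (lt_of_le_of_lt ?_ hneg) hneg
  refine lintegral_le_of_forall_bounded_setLIntegral_le hm hg.measurable fun s c hs hc => ?_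
  exact (Integrable.lintegral_ofReal_eq_of_integral_eq_zero
    (integrableOn_mul_of_bounded hgm hd (hm _ hs) hc)
    (setIntegral_mul_eq_zero_of_condExp_eq_zero hm hg hd hd0 hs hc)).le

lemma lintegral_ofReal_neg_le_of_condExp_eq_zero (hm : 𝒢 ≤ m0) {f : Ω → ℝ}
    (hf : StronglyMeasurable[𝒢] f) (hg : StronglyMeasurable[𝒢] g) (hd : Integrable d μ)
    (hd0 : μ[d | 𝒢] =ᵐ[μ] 0) :
    ∫⁻ ω, ENNReal.ofReal (-f ω) ∂μ ≤ ∫⁻ ω, ENNReal.ofReal (-(f ω + g ω * d ω)) ∂μ := by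
  refine lintegral_le_of_forall_bounded_setLIntegral_le hm
    (φ := fun ω => max |f ω| |g ω|) (hf.measurable.abs.max hg.measurable.abs) fun s c hs hc => ?_
  have hneg : MeasurableSet[𝒢] {ω | f ω < 0} := measurableSet_lt hf.measurable measurable_const
  set t := {ω | f ω < 0} ∩ s
  have ht : MeasurableSet[𝒢] t := hneg.inter hs
  have hfc : ∀ ω ∈ t, |f ω| ≤ c := fun ω hω =>
    (le_abs_self _).trans' (le_max_left _ _) |>.trans (hc ω hω.2)
  have hgc : ∀ ω ∈ t, |g ω| ≤ c := fun ω hω =>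
    (le_abs_self _).trans' (le_max_right _ _) |>.trans (hc ω hω.2)
  have hf_int : IntegrableOn f t μ := Measure.integrableOn_of_bounded (measure_ne_top _ _)
    (hf.mono hm).aestronglyMeasurable (ae_restrict_of_forall_mem (hm _ ht) hfc)
  have hgd_int : IntegrableOn (fun ω => g ω * d ω) t μ :=
    integrableOn_mul_of_bounded (hg.mono hm).aestronglyMeasurable hd (hm _ ht) hgc
  calc ∫⁻ ω in s, ENNReal.ofReal (-f ω) ∂μ
      = ∫⁻ ω in s, {ω | f ω < 0}.indicator (fun ω => ENNReal.ofReal (-f ω)) ω ∂μ := by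
        congr 1; funext ω
        by_cases hω : f ω < 0
        · simp [hω]
        · simp [hω, ENNReal.ofReal_of_nonpos (neg_nonpos.2 (not_lt.1 hω))]
    _ = ENNReal.ofReal (∫ ω in t, -f ω ∂μ) := by
        rw [setLIntegral_indicator (hm _ hneg),
          ofReal_integral_eq_lintegral_ofReal (f := fun ω => -f ω) hf_int.neg
            (ae_restrict_of_forall_mem (hm _ ht) fun ω hω => (neg_pos.2 hω.1).le)]
    _ = ENNReal.ofReal (∫ ω in t, -(f ω + g ω * d ω) ∂μ) := by
        rw [integral_neg, integral_neg, integral_add hf_int hgd_int,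
          setIntegral_mul_eq_zero_of_condExp_eq_zero hm hg hd hd0 ht hgc, add_zero]
    _ ≤ ∫⁻ ω in t, ENNReal.ofReal (-(f ω + g ω * d ω)) ∂μ :=
        ofReal_integral_le_lintegral_ofReal _
    _ ≤ ∫⁻ ω in s, ENNReal.ofReal (-(f ω + g ω * d ω)) ∂μ :=
        lintegral_mono_set Set.inter_subset_right

end ConditionallyCentred

def martingaleTransform (H M : ℕ → Ω → ℝ) (n : ℕ) (ω : Ω) : ℝ :=
  ∑ k ∈ Finset.range n, H k ω * (M (k + 1) ω - M k ω)

@[simp]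
lemma martingaleTransform_zero (H M : ℕ → Ω → ℝ) : martingaleTransform H M 0 = 0 := by
  ext ω; simp [martingaleTransform]

lemma martingaleTransform_succ (H M : ℕ → Ω → ℝ) (n : ℕ) (ω : Ω) :
    martingaleTransform H M (n + 1) ω =
      martingaleTransform H M n ω + H n ω * (M (n + 1) ω - M n ω) :=
  Finset.sum_range_succ _ _

lemma StronglyAdapted.martingaleTransform {ℱ : Filtration ℕ m0} {H M : ℕ → Ω → ℝ}
    (hH : StronglyAdapted ℱ H) (hM : StronglyAdapted ℱ M) :
    StronglyAdapted ℱ (martingaleTransform H M) := fun n => by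
  refine Finset.stronglyMeasurable_fun_sum _ fun k hk => ?_
  rw [Finset.mem_range] at hk
  exact (hH.stronglyMeasurable_le hk.le).mul
    ((hM.stronglyMeasurable_le hk).sub (hM.stronglyMeasurable_le hk.le))

lemma Martingale.condExp_succ_sub_eq_zero {ℱ : Filtration ℕ m0} {M : ℕ → Ω → ℝ}
    (hM : Martingale M ℱ μ) (n : ℕ) : μ[M (n + 1) - M n | ℱ n] =ᵐ[μ] 0 := by
  filter_upwards [condExp_sub (hM.integrable (n + 1)) (hM.integrable n) (ℱ n),
    hM.condExp_ae_eq n.le_succ, hM.condExp_ae_eq (le_refl n)] with ω h1 h2 h3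
  simp [h1, h2, h3]

theorem Martingale.integrable_martingaleTransform_and_integral_eq_zero [IsFiniteMeasure μ]
    {ℱ : Filtration ℕ m0} {M H : ℕ → Ω → ℝ} (hM : Martingale M ℱ μ)
    (hH : StronglyAdapted ℱ H) (n : ℕ)
    (hneg : ∫⁻ ω, ENNReal.ofReal (-martingaleTransform H M n ω) ∂μ < ∞) :
    Integrable (martingaleTransform H M n) μ ∧ ∫ ω, martingaleTransform H M n ω ∂μ = 0 := by
  induction n with
  | zero => simp
  | succ n ih =>
    set W := martingaleTransform H M
    have hd : Integrable (M (n + 1) - M n) μ := (hM.integrable _).sub (hM.integrable _)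
    have hW : W (n + 1) = fun ω => W n ω + H n ω * (M (n + 1) - M n) ω :=
      funext (martingaleTransform_succ H M n)
    have hincr_centred := hM.condExp_succ_sub_eq_zero n
    obtain ⟨hWn_int, hWn_zero⟩ := ih <| (lintegral_ofReal_neg_le_of_condExp_eq_zero (ℱ.le n)
      (hH.martingaleTransform hM.stronglyAdapted n) (hH n) hd hincr_centred).trans_lt
      (by rwa [hW] at hneg)
    have hincr_neg : ∫⁻ ω, ENNReal.ofReal (-(H n ω * (M (n + 1) - M n) ω)) ∂μ < ∞ := by
      calc ∫⁻ ω, ENNReal.ofReal (-(H n ω * (M (n + 1) - M n) ω)) ∂μ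
          ≤ ∫⁻ ω, (ENNReal.ofReal (-W (n + 1) ω) + ENNReal.ofReal (W n ω)) ∂μ := by
            refine lintegral_mono fun ω => ?_
            rw [hW]
            exact (ENNReal.ofReal_le_ofReal (by linarith)).trans ENNReal.ofReal_add_le
        _ = ∫⁻ ω, ENNReal.ofReal (-W (n + 1) ω) ∂μ + ∫⁻ ω, ENNReal.ofReal (W n ω) ∂μ :=
            lintegral_add_right' _ hWn_int.aemeasurable.ennreal_ofReal
        _ < ∞ := ENNReal.add_lt_top.2 ⟨hneg, hWn_int.lintegral_lt_top⟩
    have hincr_int :=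
      integrable_mul_of_condExp_eq_zero (ℱ.le n) (hH n) hd hincr_centred hincr_neg
    rw [hW]
    refine ⟨hWn_int.add hincr_int, ?_⟩
    rw [integral_add hWn_int hincr_int, hWn_zero,
      integral_mul_eq_zero_of_condExp_eq_zero (ℱ.le n) (hH n) hincr_int hd hincr_centred, add_zero]

end MeasureTheory

lemma sum_range_sub_mul_sub_eq_sum_mul_sub (a b : ℕ → ℝ) (ha : a 0 = 0) (n : ℕ) :
    ∑ k ∈ Finset.range n, (a (k + 1) - a k) * (b n - b k) =
      ∑ k ∈ Finset.range n, a (k + 1) * (b (k + 1) - b k) := by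
  induction n with
  | zero => simp
  | succ n ih =>
    have htel : ∑ k ∈ Finset.range n, (a (k + 1) - a k) = a n := by
      rw [Finset.sum_range_sub, ha, sub_zero]
    calc ∑ k ∈ Finset.range (n + 1), (a (k + 1) - a k) * (b (n + 1) - b k)
        = ∑ k ∈ Finset.range n, (a (k + 1) - a k) * (b n - b k)
          + (∑ k ∈ Finset.range n, (a (k + 1) - a k)) * (b (n + 1) - b n)
          + (a (n + 1) - a n) * (b (n + 1) - b n) := by
          rw [Finset.sum_range_succ, Finset.sum_mul, ← Finset.sum_add_distrib]
          congr 1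
          exact Finset.sum_congr rfl fun k _ => by ring
      _ = ∑ k ∈ Finset.range (n + 1), a (k + 1) * (b (k + 1) - b k) := by
          rw [ih, htel, Finset.sum_range_succ]; ring

lemma sum_range_sub_mul_sub_sub_abs_le_sum_mul_sub (a b s : ℕ → ℝ) (ε : ℝ) (ha : a 0 = 0)
    (n : ℕ) (hband : ∀ k ∈ Finset.range n, (1 - ε) * s k ≤ b k ∧ b k ≤ (1 + ε) * s k) :
    ∑ k ∈ Finset.range n, ((a (k + 1) - a k) * (b n - s k) - ε * |a (k + 1) - a k| * s k) ≤
      ∑ k ∈ Finset.range n, a (k + 1) * (b (k + 1) - b k) := by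
  rw [← sum_range_sub_mul_sub_eq_sum_mul_sub a b ha n]
  refine Finset.sum_le_sum fun k hk => ?_
  obtain ⟨hlow, hupp⟩ := hband k hk
  have hcost : (a (k + 1) - a k) * (b k - s k) ≤ |a (k + 1) - a k| * (ε * s k) :=
    (le_abs_self _).trans <| (abs_mul _ _).trans_le <|
      mul_le_mul_of_nonneg_left (abs_sub_le_iff.2 ⟨by linarith, by linarith⟩) (abs_nonneg _)
  linarith

theorem stmt16_general {Ω : Type*} {m0 : MeasurableSpace Ω} (μ : Measure Ω)
    [IsProbabilityMeasure μ] (ℱ : Filtration ℕ m0) (N : ℕ) (ε : ℝ)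
    (S : ℕ → Ω → ℝ) (hS_int : ∀ n, Integrable (S n) μ)
    (hcps : ∀ n ≤ N, (∀ᵐ ω ∂μ, (1 - ε) * S n ω ≤ (μ[S N | ℱ n]) ω) ∧
      ∀ᵐ ω ∂μ, (μ[S N | ℱ n]) ω ≤ (1 + ε) * S n ω)
    (h : ℕ → Ω → ℝ) (h0 : ∀ ω, h 0 ω = 0)
    (hpred : ∀ n, StronglyMeasurable[ℱ n] (h (n + 1)))
    (Y : Ω → ℝ)
    (hY : Y = fun ω => ∑ k ∈ Finset.range N,
      ((h (k + 1) ω - h k ω) * ((μ[S N | ℱ N]) ω - S k ω) -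
        ε * |h (k + 1) ω - h k ω| * S k ω))
    (hint : (∫⁻ ω, ENNReal.ofReal (-(Y ω)) ∂μ) < ⊤) :
    Integrable Y μ ∧ (∫ ω, Y ω ∂μ) ≤ 0 := by
  set X := martingaleTransform (fun k => h (k + 1)) (fun n => μ[S N | ℱ n]) N
  have hYX : Y ≤ᵐ[μ] X := by
    have hband : ∀ᵐ ω ∂μ, ∀ k ∈ Finset.range N,
        (1 - ε) * S k ω ≤ (μ[S N | ℱ k]) ω ∧ (μ[S N | ℱ k]) ω ≤ (1 + ε) * S k ω :=
      (eventually_all_finset _).2 fun k hk =>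
        (hcps k (Finset.mem_range.1 hk).le).1.and (hcps k (Finset.mem_range.1 hk).le).2
    filter_upwards [hband] with ω hω
    rw [hY]
    exact sum_range_sub_mul_sub_sub_abs_le_sum_mul_sub (h · ω) (fun n => (μ[S N | ℱ n]) ω)
      (S · ω) ε (h0 ω) N hω
  obtain ⟨hX_int, hX_zero⟩ :=
    (martingale_condExp (S N) ℱ μ).integrable_martingaleTransform_and_integral_eq_zero hpred N
      ((lintegral_mono_ae (hYX.mono fun ω hω => ENNReal.ofReal_le_ofReal (neg_le_neg hω))).trans_lt
        hint)
  have hh : ∀ k, AEStronglyMeasurable (h k) μ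
    | 0 => by simp only [funext h0]; exact aestronglyMeasurable_const
    | k + 1 => ((hpred k).mono (ℱ.le k)).aestronglyMeasurable
  have hS := fun k => (hS_int k).aestronglyMeasurable
  have hY_int : Integrable Y μ := integrable_of_lintegral_ofReal_lt_top (by rw [hY]; fun_prop)
    ((lintegral_mono_ae (hYX.mono fun ω hω => ENNReal.ofReal_le_ofReal hω)).trans_lt
      hX_int.lintegral_lt_top) hint
  exact ⟨hY_int, (integral_mono_ae hY_int hX_int hYX).trans hX_zero.le⟩

/-- Under a consistent price system with proportional transaction costs
(`(1−ε)S_n ≤ E[S_N|ℱ_n] ≤ (1+ε)S_n`), the terminal trading gains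
`Y_N = Σ_{k=1}^N [(h_k − h_{k−1})(S̃_N − S_{k−1}) − ε|h_k − h_{k−1}| S_{k−1}]`
of a predictable strategy with `h_0 = 0` satisfy `E[Y_N] ≤ 0`, provided
`E[Y_N⁻] < ∞`. -/
theorem stmt16 {Ω : Type*} {m0 : MeasurableSpace Ω} (μ : Measure Ω)
    [IsProbabilityMeasure μ] (ℱ : Filtration ℕ m0) (N : ℕ) (ε : ℝ) (hε : 0 ≤ ε)
    (S : ℕ → Ω → ℝ) (hS_adapted : Adapted ℱ S) (hS_int : ∀ n, Integrable (S n) μ)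
    (hS_nonneg : ∀ n ω, 0 ≤ S n ω)
    (hcps : ∀ n ≤ N, (∀ᵐ ω ∂μ, (1 - ε) * S n ω ≤ (μ[S N | ℱ n]) ω) ∧
      ∀ᵐ ω ∂μ, (μ[S N | ℱ n]) ω ≤ (1 + ε) * S n ω)
    (h : ℕ → Ω → ℝ) (h0 : ∀ ω, h 0 ω = 0)
    (hpred : ∀ n, StronglyMeasurable[ℱ n] (h (n + 1)))
    (Y : Ω → ℝ)
    (hY : Y = fun ω => ∑ k ∈ Finset.range N,
      ((h (k + 1) ω - h k ω) * ((μ[S N | ℱ N]) ω - S k ω) -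
        ε * |h (k + 1) ω - h k ω| * S k ω))
    (hint : (∫⁻ ω, ENNReal.ofReal (-(Y ω)) ∂μ) < ⊤) :
    Integrable Y μ ∧ (∫ ω, Y ω ∂μ) ≤ 0 :=
  stmt16_general μ ℱ N ε S hS_int hcps h h0 hpred Y hY hint
end

section
/- Let (Ω, ℱ, (ℱ_n)_{n=0}^N, μ) be a filtered probability space and (S_n) an adapted μ-integrable ℝ^d-valued process that is a martingale under μ. For any finite sequence h_1,…,h_N of ℝ^d-valued ℱ_{n−1}-measurable functions, if E^μ[((h·S)_N)⁻] < ∞ where (h·S)_N := Σ_{n=1}^N h_n·(S_n − S_{n−1}), then (h·S)_N is μ-integrable and E^μ[(h·S)_N] = 0. -/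
/-!
Write `(h·S)_N = ∑_{n<N} W_n` with `W_n = h_{n+1}·(S_{n+1} - S_n)`. The increment `W_n` need not
be integrable, but on each of the `ℱ_n`-measurable sets `B_k = {‖h_{n+1}‖ ≤ k}` it is, with zero
conditional expectation given `ℱ_n`. Two facts about such a `W`, relative to a σ-algebra `m`,
drive an induction on `N`:
* if `W⁻` is integrable, Fatou gives
  `E[W⁺] ≤ liminf E[(1_{B_k} W)⁺] = liminf E[(1_{B_k} W)⁻] ≤ E[W⁻]`,
  so `W` is integrable, and then `E[W] = lim E[1_{B_k} W] = 0`;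
* if `X` is `m`-measurable and `(X + W)⁻` is integrable, conditioning `-(X + W)⁻ ≤ X + W` on `m`
  on the sets where `X` and `h` are bounded gives `X⁻ ≤ E[(X + W)⁻ | m]`, so `X⁻` is integrable.
For `X = (h·S)_N` the second fact and the induction hypothesis make `X` integrable with mean zero;
then `W_N⁻ ≤ (X + W_N)⁻ + |X|` and the first fact completes the step.
-/

set_option autoImplicit false

open MeasureTheory Filter Topology ENNReal Set

section LocallyCondExpZero

variable {Ω : Type*} {m m0 : MeasurableSpace Ω} {μ : Measure Ω}

lemma tendsto_indicator_of_eventually_mem {ι β : Type*} [Zero β] [TopologicalSpace β]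
    {l : Filter ι} {B : ι → Set Ω} {f : Ω → β} {ω : Ω} (h : ∀ᶠ k in l, ω ∈ B k) :
    Tendsto (fun k => (B k).indicator f ω) l (𝓝 (f ω)) :=
  tendsto_const_nhds.congr' (h.mono fun _ hk => (indicator_of_mem hk f).symm)

lemma integrable_neg_part_iff {f : Ω → ℝ} (hf : AEStronglyMeasurable f μ) :
    Integrable (fun ω => max (-f ω) 0) μ ↔ ∫⁻ ω, ENNReal.ofReal (-f ω) ∂μ < ∞ := by
  rw [← lintegral_ofReal_ne_top_iff_integrable (f := fun ω => max (-f ω) 0) (by fun_prop)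
    (ae_of_all _ fun _ => le_max_right _ _), lt_top_iff_ne_top]
  simp

lemma lintegral_ofReal_eq_lintegral_ofReal_neg_of_integral_eq_zero {f : Ω → ℝ}
    (hf : Integrable f μ) (h0 : ∫ ω, f ω ∂μ = 0) :
    ∫⁻ ω, ENNReal.ofReal (f ω) ∂μ = ∫⁻ ω, ENNReal.ofReal (-f ω) ∂μ := by
  rw [integral_eq_lintegral_pos_part_sub_lintegral_neg_part hf, sub_eq_zero] at h0
  exact (ENNReal.toReal_eq_toReal_iff' hf.lintegral_lt_top.ne hf.neg.lintegral_lt_top.ne).1 h0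

lemma lintegral_ofReal_neg_lt_top_of_add {X W : Ω → ℝ} (hX : Integrable X μ)
    (h : ∫⁻ ω, ENNReal.ofReal (-(X ω + W ω)) ∂μ < ∞) :
    ∫⁻ ω, ENNReal.ofReal (-W ω) ∂μ < ∞ := calc
  ∫⁻ ω, ENNReal.ofReal (-W ω) ∂μ
    ≤ ∫⁻ ω, ENNReal.ofReal (-(X ω + W ω)) + ENNReal.ofReal (X ω) ∂μ :=
      lintegral_mono fun ω => by
        rw [show -W ω = -(X ω + W ω) + X ω by ring]
        exact ENNReal.ofReal_add_le
  _ = ∫⁻ ω, ENNReal.ofReal (-(X ω + W ω)) ∂μ + ∫⁻ ω, ENNReal.ofReal (X ω) ∂μ :=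
      lintegral_add_right' _ hX.aemeasurable.ennreal_ofReal
  _ < ∞ := ENNReal.add_lt_top.2 ⟨h, hX.lintegral_lt_top⟩

lemma ae_neg_le_condExp_neg_part_add_of_mem (hm : m ≤ m0) [SigmaFinite (μ.trim hm)]
    {A : Set Ω} (hA : MeasurableSet[m] A) {X W : Ω → ℝ} (hX : StronglyMeasurable[m] X)
    (hXA : Integrable (A.indicator X) μ) (hWA : Integrable (A.indicator W) μ)
    (hWA0 : μ[A.indicator W | m] =ᵐ[μ] 0)
    (hY : Integrable (fun ω => max (-(X ω + W ω)) 0) μ) :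
    ∀ᵐ ω ∂μ, ω ∈ A → -X ω ≤ μ[fun ω => max (-(X ω + W ω)) 0 | m] ω := by
  set Y : Ω → ℝ := fun ω => max (-(X ω + W ω)) 0
  have hXW : μ[A.indicator X + A.indicator W | m] =ᵐ[μ] A.indicator X := by
    refine (condExp_add hXA hWA m).trans ?_
    rw [condExp_of_stronglyMeasurable hm (hX.indicator hA) hXA]
    filter_upwards [hWA0] with ω hω
    simp [hω]
  have hle : -A.indicator Y ≤ᵐ[μ] A.indicator X + A.indicator W := ae_of_all _ fun ω => by
    by_cases hω : ω ∈ A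
    · simp only [Y, Pi.neg_apply, Pi.add_apply, indicator_of_mem hω]
      linarith [le_max_left (-(X ω + W ω)) 0]
    · simp [hω]
  filter_upwards [condExp_mono (m := m) (hY.indicator (hm _ hA)).neg (hXA.add hWA) hle, hXW,
    condExp_neg (A.indicator Y) m, condExp_indicator hY hA] with ω hmono hXW hneg hind hω
  simp only [hneg, hind, hXW, Pi.neg_apply, indicator_of_mem hω] at hmono
  linarith

/-- `W` has generalized conditional expectation zero given `m` (Jacod–Shiryaev), localized along
`m`-measurable sets. -/
def LocallyCondExpZero (m : MeasurableSpace Ω) (μ : Measure[m0] Ω) (W : Ω → ℝ) : Prop :=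
  ∃ B : ℕ → Set Ω, (∀ k, MeasurableSet[m] (B k)) ∧ (∀ ω, ∀ᶠ k in atTop, ω ∈ B k) ∧
    ∀ k, Integrable ((B k).indicator W) μ ∧ μ[(B k).indicator W | m] =ᵐ[μ] 0

namespace LocallyCondExpZero

variable {W : Ω → ℝ}

lemma aestronglyMeasurable (hW : LocallyCondExpZero m μ W) : AEStronglyMeasurable W μ := by
  obtain ⟨B, -, hB, hBW⟩ := hW
  exact aestronglyMeasurable_of_tendsto_ae atTop (fun k => (hBW k).1.1)
    (ae_of_all _ fun ω => tendsto_indicator_of_eventually_mem (hB ω))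

lemma integrable_and_integral_eq_zero (hm : m ≤ m0) [SigmaFinite (μ.trim hm)]
    (hW : LocallyCondExpZero m μ W) (hneg : ∫⁻ ω, ENNReal.ofReal (-W ω) ∂μ < ∞) :
    Integrable W μ ∧ ∫ ω, W ω ∂μ = 0 := by
  have hWm := hW.aestronglyMeasurable
  obtain ⟨B, -, hB, hBW⟩ := hW
  have hlim ω : Tendsto (fun k => (B k).indicator W ω) atTop (𝓝 (W ω)) :=
    tendsto_indicator_of_eventually_mem (hB ω)
  have hzero k : ∫ ω, (B k).indicator W ω ∂μ = 0 := by
    rw [← integral_condExp hm, integral_congr_ae (hBW k).2, Pi.zero_def, integral_zero]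
  have hpos : ∫⁻ ω, ENNReal.ofReal (W ω) ∂μ < ∞ := calc
    ∫⁻ ω, ENNReal.ofReal (W ω) ∂μ
      = ∫⁻ ω, liminf (fun k => ENNReal.ofReal ((B k).indicator W ω)) atTop ∂μ :=
        lintegral_congr fun ω =>
          ((ENNReal.continuous_ofReal.tendsto _).comp (hlim ω)).liminf_eq.symm
    _ ≤ liminf (fun k => ∫⁻ ω, ENNReal.ofReal ((B k).indicator W ω) ∂μ) atTop :=
        lintegral_liminf_le' fun k => (hBW k).1.1.aemeasurable.ennreal_ofReal
    _ = liminf (fun k => ∫⁻ ω, ENNReal.ofReal (-(B k).indicator W ω) ∂μ) atTop := by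
        simp_rw [lintegral_ofReal_eq_lintegral_ofReal_neg_of_integral_eq_zero (hBW _).1
          (hzero _)]
    _ ≤ ∫⁻ ω, ENNReal.ofReal (-W ω) ∂μ := by
        refine liminf_le_of_frequently_le'
          (Frequently.of_forall fun k => lintegral_mono fun ω => ?_)
        by_cases hω : ω ∈ B k <;> simp [hω]
    _ < ∞ := hneg
  have hWint : Integrable W μ := by
    have hp := (integrable_neg_part_iff hWm.neg).2 (by simpa using hpos)
    have hn := (integrable_neg_part_iff hWm).2 hneg
    exact (hp.sub hn).congr (ae_of_all _ fun ω => by simp)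
  have hconv : Tendsto (fun k => ∫ ω, (B k).indicator W ω ∂μ) atTop (𝓝 (∫ ω, W ω ∂μ)) :=
    tendsto_integral_of_dominated_convergence (fun ω => ‖W ω‖) (fun k => (hBW k).1.1)
      hWint.norm (fun k => ae_of_all _ fun ω => norm_indicator_le_norm_self _ _)
      (ae_of_all _ hlim)
  simp_rw [hzero] at hconv
  exact ⟨hWint, (tendsto_nhds_unique tendsto_const_nhds hconv).symm⟩

lemma ae_neg_le_condExp_neg_part_add [IsFiniteMeasure μ] (hm : m ≤ m0)
    (hW : LocallyCondExpZero m μ W) {X : Ω → ℝ} (hX : StronglyMeasurable[m] X)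
    (hY : Integrable (fun ω => max (-(X ω + W ω)) 0) μ) :
    ∀ᵐ ω ∂μ, -X ω ≤ μ[fun ω => max (-(X ω + W ω)) 0 | m] ω := by
  obtain ⟨B, hBm, hB, hBW⟩ := hW
  set C : ℕ → Set Ω := fun k => {ω | |X ω| ≤ k}
  have hCm k : MeasurableSet[m] (C k) :=
    (continuous_abs.comp_stronglyMeasurable hX).measurable measurableSet_Iic
  have hon k : ∀ᵐ ω ∂μ, ω ∈ C k ∩ B k →
      -X ω ≤ μ[fun ω => max (-(X ω + W ω)) 0 | m] ω := by
    have hXC : Integrable ((C k ∩ B k).indicator X) μ := by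
      refine (integrable_const (k : ℝ)).mono'
        ((hX.indicator ((hCm k).inter (hBm k))).mono hm).aestronglyMeasurable
        (ae_of_all _ fun ω => ?_)
      by_cases hω : ω ∈ C k ∩ B k
      · rw [indicator_of_mem hω, Real.norm_eq_abs]
        exact hω.1
      · simp [hω]
    refine ae_neg_le_condExp_neg_part_add_of_mem hm ((hCm k).inter (hBm k)) hX hXC ?_ ?_ hY
    · rw [← indicator_indicator]
      exact (hBW k).1.indicator (hm _ (hCm k))
    · rw [← indicator_indicator]
      filter_upwards [condExp_indicator (hBW k).1 (hCm k), (hBW k).2] with ω h1 h2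
      simp [h1, h2]
  filter_upwards [ae_all_iff.2 hon] with ω hω
  obtain ⟨k, hk⟩ := ((tendsto_natCast_atTop_atTop.eventually_ge_atTop |X ω|).and (hB ω)).exists
  exact hω k hk

end LocallyCondExpZero

lemma locallyCondExpZero_bilin {E F : Type*} [NormedAddCommGroup E] [NormedSpace ℝ E]
    [CompleteSpace E] [NormedAddCommGroup F] [NormedSpace ℝ F]
    (hm : m ≤ m0) (L : F →L[ℝ] E →L[ℝ] ℝ) {f : Ω → F} {g : Ω → E}
    (hf : StronglyMeasurable[m] f) (hg : Integrable g μ) (hg0 : μ[g | m] =ᵐ[μ] 0) :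
    LocallyCondExpZero m μ (fun ω => L (f ω) (g ω)) := by
  set B : ℕ → Set Ω := fun k => {ω | ‖f ω‖ ≤ k}
  have hBm k : MeasurableSet[m] (B k) := hf.norm.measurable measurableSet_Iic
  have hind k : (B k).indicator (fun ω => L (f ω) (g ω)) =
      fun ω => L ((B k).indicator f ω) (g ω) := by
    ext ω
    by_cases hω : ω ∈ B k <;> simp [hω]
  have hint k : Integrable (fun ω => L ((B k).indicator f ω) (g ω)) μ := by
    refine L.integrable_of_bilin_of_bdd_left k
      ((hf.indicator (hBm k)).mono hm).aestronglyMeasurable (ae_of_all _ fun ω => ?_) hg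
    by_cases hω : ω ∈ B k
    · rw [indicator_of_mem hω]
      exact hω
    · simp [hω]
  refine ⟨B, hBm, fun ω => tendsto_natCast_atTop_atTop.eventually_ge_atTop ‖f ω‖,
    fun k => ⟨by rw [hind]; exact hint k, ?_⟩⟩
  rw [hind]
  filter_upwards [condExp_bilin_of_stronglyMeasurable_left L (hf.indicator (hBm k)) (hint k) hg,
    hg0] with ω h1 h2
  simp [h1, h2]

theorem integrable_sum_and_integral_eq_zero_of_locallyCondExpZero [IsFiniteMeasure μ]
    (ℱ : Filtration ℕ m0) {W : ℕ → Ω → ℝ} (hW : ∀ n, LocallyCondExpZero (ℱ n) μ (W n))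
    (hadapt : ∀ n, StronglyMeasurable[ℱ (n + 1)] (W n)) (N : ℕ)
    (hneg : ∫⁻ ω, ENNReal.ofReal (-∑ n ∈ Finset.range N, W n ω) ∂μ < ∞) :
    Integrable (fun ω => ∑ n ∈ Finset.range N, W n ω) μ ∧
      ∫ ω, ∑ n ∈ Finset.range N, W n ω ∂μ = 0 := by
  induction N with
  | zero => simp
  | succ N ih =>
    set X : Ω → ℝ := fun ω => ∑ n ∈ Finset.range N, W n ω
    have hX : StronglyMeasurable[ℱ N] X := Finset.stronglyMeasurable_fun_sum _ fun n hn =>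
      (hadapt n).mono (ℱ.mono (Finset.mem_range.1 hn))
    simp only [Finset.sum_range_succ] at hneg ⊢
    have hY : Integrable (fun ω => max (-(X ω + W N ω)) 0) μ :=
      (integrable_neg_part_iff ((hX.mono (ℱ.le N)).aestronglyMeasurable.add
        (hW N).aestronglyMeasurable)).2 hneg
    have hXneg : ∫⁻ ω, ENNReal.ofReal (-X ω) ∂μ < ∞ := calc
      ∫⁻ ω, ENNReal.ofReal (-X ω) ∂μ
        ≤ ∫⁻ ω, ENNReal.ofReal (μ[fun ω => max (-(X ω + W N ω)) 0 | ℱ N] ω) ∂μ :=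
          lintegral_mono_ae <| ((hW N).ae_neg_le_condExp_neg_part_add (ℱ.le N) hX hY).mono
            fun ω hω => ENNReal.ofReal_le_ofReal hω
      _ < ∞ := integrable_condExp.lintegral_lt_top
    obtain ⟨hXint, hX0⟩ := ih hXneg
    obtain ⟨hWint, hW0⟩ := (hW N).integrable_and_integral_eq_zero (ℱ.le N)
      (lintegral_ofReal_neg_lt_top_of_add hXint hneg)
    exact ⟨hXint.add hWint, by rw [integral_add hXint hWint, hX0, hW0, add_zero]⟩

end LocallyCondExpZero

lemma MeasureTheory.Martingale.condExp_sub_ae_eq_zero {Ω E : Type*} {m0 : MeasurableSpace Ω}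
    {μ : Measure Ω} [NormedAddCommGroup E] [NormedSpace ℝ E] [CompleteSpace E]
    {ℱ : Filtration ℕ m0} [SigmaFiniteFiltration μ ℱ] {S : ℕ → Ω → E}
    (hS : Martingale S ℱ μ) {i j : ℕ} (hij : i ≤ j) :
    μ[S j - S i | ℱ i] =ᵐ[μ] 0 := by
  filter_upwards [condExp_sub (hS.integrable j) (hS.integrable i) (ℱ i), hS.condExp_ae_eq hij]
    with ω h1 h2
  rw [h1, Pi.sub_apply, h2, condExp_of_stronglyMeasurable (ℱ.le i) (hS.stronglyMeasurable i)
    (hS.integrable i)]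
  simp

noncomputable def dotProductCLM (ι : Type*) [Fintype ι] : (ι → ℝ) →L[ℝ] (ι → ℝ) →L[ℝ] ℝ :=
  ∑ i, (ContinuousLinearMap.mul ℝ ℝ).bilinearComp (.proj i) (.proj i)

@[simp]
lemma dotProductCLM_apply {ι : Type*} [Fintype ι] (x y : ι → ℝ) :
    dotProductCLM ι x y = ∑ i, x i * y i := by
  simp [dotProductCLM]

/-- If `S` is a `d`-dimensional martingale and `h` a predictable strategy, one-sided
integrability of the terminal gain `(h·S)_N = Σ_{n=1}^N h_n·(S_n − S_{n−1})` implies that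
it is integrable with expectation zero. -/
theorem stmt19 {Ω : Type*} {m0 : MeasurableSpace Ω} (μ : Measure Ω)
    [IsProbabilityMeasure μ] (ℱ : Filtration ℕ m0) (d N : ℕ)
    (S : ℕ → Ω → (Fin d → ℝ)) (hmart : Martingale S ℱ μ)
    (h : ℕ → Ω → (Fin d → ℝ)) (hpred : ∀ n, StronglyMeasurable[ℱ n] (h (n + 1)))
    (G : Ω → ℝ)
    (hG : G = fun ω => ∑ n ∈ Finset.range N, ∑ i, h (n + 1) ω i * (S (n + 1) ω i - S n ω i))
    (hint : (∫⁻ ω, ENNReal.ofReal (-(G ω)) ∂μ) < ⊤) :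
    Integrable G μ ∧ (∫ ω, G ω ∂μ) = 0 := by
  subst hG
  have hW n : LocallyCondExpZero (ℱ n) μ
      (fun ω => ∑ i, h (n + 1) ω i * (S (n + 1) ω i - S n ω i)) := by
    simpa using locallyCondExpZero_bilin (ℱ.le n) (dotProductCLM (Fin d)) (hpred n)
      ((hmart.integrable _).sub (hmart.integrable _)) (hmart.condExp_sub_ae_eq_zero n.le_succ)
  have hadapt n : StronglyMeasurable[ℱ (n + 1)]
      (fun ω => ∑ i, h (n + 1) ω i * (S (n + 1) ω i - S n ω i)) := by
    simpa [Function.comp_def] using (dotProductCLM (Fin d)).continuous₂.comp_stronglyMeasurable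
      (((hpred n).mono (ℱ.mono n.le_succ)).prodMk ((hmart.stronglyMeasurable (n + 1)).sub
        ((hmart.stronglyMeasurable n).mono (ℱ.mono n.le_succ))))
  exact integrable_sum_and_integral_eq_zero_of_locallyCondExpZero ℱ hW hadapt N hint
end
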